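/- arXiv:2504.12106 — 4 statements merged into one kernel-verified Lean document; each statement's English description precedes it below -/
import Mathlib

section
/- For every i ∈ I and every b ∈ 𝓑(∞), the element f̃*_i(b) again lies in 𝓑(∞). -/
open Finset

/-- Membership of `(s,t)` in the index set `𝓘 = {(s,t) : 1 ≤ s, 1 ≤ t ≤ n, s+t ≤ n+1}`
for type `Aₙ`. -/
def cellA (n : ℕ) (s t : ℤ) : Prop :=
  1 ≤ s ∧ 1 ≤ t ∧ t ≤ (n : ℤ) ∧ s + t ≤ (n : ℤ) + 1

instance (n : ℕ) (s t : ℤ) : Decidable (cellA n s t) := by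
  unfold cellA; infer_instance

/-- The type-`Aₙ` polyhedral realization `𝓑(∞)`: families of nonnegative integers,
vanishing outside `𝓘`, with `b_{s,t} ≥ b_{s+1,t-1}` for `s ≥ 1`, `2 ≤ t ≤ n`. -/
def BinfA (n : ℕ) : Set (ℤ → ℤ → ℤ) :=
  {b | (∀ s t, 0 ≤ b s t) ∧
       (∀ s t, ¬ cellA n s t → b s t = 0) ∧
       (∀ s t, 1 ≤ s → 2 ≤ t → t ≤ (n : ℤ) → b (s + 1) (t - 1) ≤ b s t)}

/-- The standard basis family `e_{s,t}` (zero if `(s,t) ∉ 𝓘`). -/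
def eA (n : ℕ) (s t : ℤ) : ℤ → ℤ → ℤ :=
  fun u v => if u = s ∧ v = t ∧ cellA n s t then 1 else 0

/-- `∂_{s,t}(b) = b_{s,t} − b_{s,t+1} − b_{s+1,t−1} + b_{s+1,t}`. -/
def dA (b : ℤ → ℤ → ℤ) (s t : ℤ) : ℤ :=
  b s t - b s (t + 1) - b (s + 1) (t - 1) + b (s + 1) t

/-- `∂*_{s,t}(b) = b_{s−1,t} − b_{s−1,t+1} − b_{s,t−1} + b_{s,t}`. -/
def dsA (b : ℤ → ℤ → ℤ) (s t : ℤ) : ℤ :=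
  b (s - 1) t - b (s - 1) (t + 1) - b s (t - 1) + b s t

/-- `Γ^{(i)}_k(b) = Σ_{s=k}^{n+1−i} ∂_{s,i}(b)`. -/
noncomputable def GamA (n : ℕ) (b : ℤ → ℤ → ℤ) (i k : ℤ) : ℤ :=
  ∑ s ∈ Finset.Icc k ((n : ℤ) + 1 - i), dA b s i

/-- `Γ*^{(i)}_k(b) = Σ_{t=1}^{k} ∂*_{t,i+1−t}(b)`. -/
noncomputable def GamSA (b : ℤ → ℤ → ℤ) (i k : ℤ) : ℤ :=
  ∑ t ∈ Finset.Icc (1 : ℤ) k, dsA b t (i + 1 - t)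

/-- `ε_i(b) = max_{1≤k≤n+1−i} Γ^{(i)}_k(b)`. -/
noncomputable def epsA (n : ℕ) (b : ℤ → ℤ → ℤ) (i : ℤ) : ℤ :=
  (((Finset.Icc (1 : ℤ) ((n : ℤ) + 1 - i)).image (GamA n b i)).max).unbotD 0

/-- `ε*_i(b) = max_{1≤k≤i} Γ*^{(i)}_k(b)`. -/
noncomputable def epsSA (b : ℤ → ℤ → ℤ) (i : ℤ) : ℤ :=
  (((Finset.Icc (1 : ℤ) i).image (GamSA b i)).max).unbotD 0

/-- `m_i(b)`: the smallest `k` attaining `ε_i(b)`. -/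
noncomputable def mA (n : ℕ) (b : ℤ → ℤ → ℤ) (i : ℤ) : ℤ :=
  (((Finset.Icc (1 : ℤ) ((n : ℤ) + 1 - i)).filter
      (fun k => GamA n b i k = epsA n b i)).min).untopD 0

/-- `m*_i(b)`: the smallest `k` attaining `ε*_i(b)`. -/
noncomputable def mSA (b : ℤ → ℤ → ℤ) (i : ℤ) : ℤ :=
  (((Finset.Icc (1 : ℤ) i).filter (fun k => GamSA b i k = epsSA b i)).min).untopD 0

/-- `M*_i(b)`: the largest `k` attaining `ε*_i(b)`. -/
noncomputable def MSA (b : ℤ → ℤ → ℤ) (i : ℤ) : ℤ :=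
  (((Finset.Icc (1 : ℤ) i).filter (fun k => GamSA b i k = epsSA b i)).max).unbotD 0

/-- `f̃_i(b) = b + e_{m_i(b),i}`. -/
noncomputable def fA (n : ℕ) (b : ℤ → ℤ → ℤ) (i : ℤ) : ℤ → ℤ → ℤ :=
  fun u v => b u v + eA n (mA n b i) i u v

/-- `f̃*_i(b) = b + Σ_{s=1}^{m*_i(b)} (e_{s,i+1−s} − e_{s−1,i+1−s})`. -/
noncomputable def fSA (n : ℕ) (b : ℤ → ℤ → ℤ) (i : ℤ) : ℤ → ℤ → ℤ :=
  fun u v => b u v +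
    ∑ s ∈ Finset.Icc (1 : ℤ) (mSA b i),
      (eA n s (i + 1 - s) u v - eA n (s - 1) (i + 1 - s) u v)

/-- `ẽ*_i(b) = b − Σ_{s=1}^{M*_i(b)} (e_{s,i+1−s} − e_{s−1,i+1−s})`. -/
noncomputable def eSA (n : ℕ) (b : ℤ → ℤ → ℤ) (i : ℤ) : ℤ → ℤ → ℤ :=
  fun u v => b u v -
    ∑ s ∈ Finset.Icc (1 : ℤ) (MSA b i),
      (eA n s (i + 1 - s) u v - eA n (s - 1) (i + 1 - s) u v)

/-- Telescoping: `Γ*^{(i)}_k(b) = b_{k,i+1-k} - b_{k,i-k}` for `k ≥ 0`. -/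
lemma gamSA_eq (n : ℕ) (i : ℤ) (b : ℤ → ℤ → ℤ)
    (hb0 : ∀ s t, ¬ cellA n s t → b s t = 0) :
    ∀ k : ℤ, 0 ≤ k → GamSA b i k = b k (i + 1 - k) - b k (i - k) := by
  have hz0 : ∀ t, b 0 t = 0 := fun t => hb0 0 t (by simp [cellA])
  refine Int.le_induction ?_ ?_
  · rw [GamSA, Finset.Icc_eq_empty (by omega), Finset.sum_empty,
        show (i:ℤ) + 1 - 0 = i + 1 by ring, show (i:ℤ) - 0 = i by ring, hz0, hz0]
    ring
  · intro k hk ih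
    have hins : Finset.Icc (1:ℤ) (k+1) = insert (k+1) (Finset.Icc 1 k) := by
      ext x; simp [Finset.mem_Icc]; omega
    rw [GamSA, hins, Finset.sum_insert (by simp [Finset.mem_Icc])]
    have : (∑ t ∈ Finset.Icc (1:ℤ) k, dsA b t (i + 1 - t)) = GamSA b i k := rfl
    rw [this, ih]
    rw [dsA]
    rw [show k + 1 - 1 = k from by ring,
        show i + 1 - (k+1) + 1 = i + 1 - k from by ring,
        show i + 1 - (k+1) - 1 = i - (k+1) from by ring,
        show i + 1 - (k+1) = i - k from by ring]
    ring

/-- `f̃*_i(b)` again lies in `𝓑(∞)`. -/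
theorem stmt1 (n : ℕ) (hn : 1 ≤ n) (i : ℤ) (hi1 : 1 ≤ i) (hin : i ≤ (n : ℤ))
    (b : ℤ → ℤ → ℤ) (hb : b ∈ BinfA n) :
    fSA n b i ∈ BinfA n := by
  obtain ⟨hpos, hzero, hord⟩ := hb
  set m := mSA b i with hm
  clear_value m
  -- facts about the maximum and its smallest attaining index
  have hIcc : (Finset.Icc (1:ℤ) i).Nonempty := ⟨1, Finset.mem_Icc.mpr ⟨le_refl 1, hi1⟩⟩
  have hImg := hIcc.image (GamSA b i)
  have heps : epsSA b i = ((Finset.Icc (1:ℤ) i).image (GamSA b i)).max' hImg := by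
    unfold epsSA; rw [← Finset.coe_max' hImg, WithBot.unbotD_coe]
  have hle : ∀ k, 1 ≤ k → k ≤ i → GamSA b i k ≤ epsSA b i := by
    intro k hk1 hk2; rw [heps]
    exact Finset.le_max' _ _ (Finset.mem_image_of_mem _ (Finset.mem_Icc.mpr ⟨hk1, hk2⟩))
  have hFne : ((Finset.Icc (1:ℤ) i).filter (fun k => GamSA b i k = epsSA b i)).Nonempty := by
    have h := Finset.max'_mem _ hImg
    rw [← heps] at h
    obtain ⟨k, hk, hk'⟩ := Finset.mem_image.mp h
    exact ⟨k, Finset.mem_filter.mpr ⟨hk, hk'⟩⟩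
  have hmdef : m = ((Finset.Icc (1:ℤ) i).filter
      (fun k => GamSA b i k = epsSA b i)).min' hFne := by
    rw [hm]; unfold mSA; rw [← Finset.coe_min' hFne, WithTop.untopD_coe]
  have hmmem : m ∈ (Finset.Icc (1:ℤ) i).filter (fun k => GamSA b i k = epsSA b i) := by
    rw [hmdef]; exact Finset.min'_mem _ hFne
  obtain ⟨hmIcc, hgmeq⟩ := Finset.mem_filter.mp hmmem
  obtain ⟨hm1, hmi⟩ := Finset.mem_Icc.mp hmIcc
  have hminle : ∀ k, 1 ≤ k → k ≤ i → GamSA b i k = epsSA b i → m ≤ k := by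
    intro k a a' c; rw [hmdef]
    exact Finset.min'_le ((Finset.Icc (1:ℤ) i).filter (fun k => GamSA b i k = epsSA b i)) k
      (Finset.mem_filter.mpr ⟨Finset.mem_Icc.mpr ⟨a, a'⟩, c⟩)
  have hltm : ∀ k, 1 ≤ k → k < m → GamSA b i k < epsSA b i := by
    intro k a c
    rcases (hle k a (by omega)).lt_or_eq with h | h
    · exact h
    · exact absurd (hminle k a (by omega) h) (by omega)
  have hg := gamSA_eq n i b hzero
  -- antitonicity along the diagonal s + t = i + 1
  have hA : ∀ s k : ℤ, 1 ≤ s → s ≤ k → k ≤ i → b k (i + 1 - k) ≤ b s (i + 1 - s) := by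
    intro s
    have main : ∀ k : ℤ, s ≤ k → (1 ≤ s → k ≤ i → b k (i + 1 - k) ≤ b s (i + 1 - s)) := by
      refine Int.le_induction ?_ ?_
      · intro _ _; exact le_refl _
      · intro k hk ih h1 h3
        have step : b (k + 1) (i + 1 - (k + 1)) ≤ b k (i + 1 - k) := by
          have := hord k (i + 1 - k) (by omega) (by omega) (by omega)
          rw [show i + 1 - k - 1 = i + 1 - (k + 1) from by ring] at this
          exact this
        exact le_trans step (ih h1 (by omega))
    intro k h1 h2 h3; exact main k h2 h1 h3
  -- key inequality on the diagonal s + t = i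
  have hkey : ∀ s, 1 ≤ s → s < m → b m (i - m) + 1 ≤ b s (i - s) := by
    intro s h1 h2
    have h3 := hltm s h1 h2
    rw [hg s (by omega)] at h3
    have h4 : GamSA b i m = epsSA b i := hgmeq
    rw [hg m (by omega)] at h4
    have h5 := hA s m h1 (le_of_lt h2) hmi
    linarith
  -- explicit value of fSA
  have hval : ∀ u v : ℤ, fSA n b i u v =
      b u v + (if 1 ≤ u ∧ u ≤ m ∧ u + v = i + 1 then 1 else 0)
            - (if 1 ≤ u ∧ u ≤ m - 1 ∧ u + v = i then 1 else 0) := by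
    intro u v
    have hS1 : (∑ s ∈ Finset.Icc (1:ℤ) m, eA n s (i + 1 - s) u v)
        = (if 1 ≤ u ∧ u ≤ m ∧ u + v = i + 1 then 1 else 0) := by
      by_cases hu : 1 ≤ u ∧ u ≤ m
      · rw [Finset.sum_eq_single u]
        · unfold eA cellA; split_ifs <;> omega
        · intro s hs hsu
          unfold eA; rw [if_neg]; intro h; exact hsu h.1.symm
        · intro h; exact absurd (Finset.mem_Icc.mpr ⟨hu.1, hu.2⟩) h
      · rw [Finset.sum_eq_zero, if_neg (by omega)]
        intro s hs
        rw [Finset.mem_Icc] at hs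
        unfold eA cellA; split_ifs with h
        · omega
        · rfl
    have hS2 : (∑ s ∈ Finset.Icc (1:ℤ) m, eA n (s - 1) (i + 1 - s) u v)
        = (if 1 ≤ u ∧ u ≤ m - 1 ∧ u + v = i then 1 else 0) := by
      by_cases hu : 1 ≤ u ∧ u ≤ m - 1
      · rw [Finset.sum_eq_single (u + 1)]
        · unfold eA cellA; split_ifs <;> omega
        · intro s hs hsu
          unfold eA; rw [if_neg]; intro h
          have := h.1; omega
        · intro h; exact absurd (Finset.mem_Icc.mpr ⟨by omega, by omega⟩) h
      · rw [Finset.sum_eq_zero, if_neg (by omega)]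
        intro s hs
        rw [Finset.mem_Icc] at hs
        unfold eA cellA; split_ifs with h
        · omega
        · rfl
    unfold fSA
    rw [← hm, Finset.sum_sub_distrib, hS1, hS2]
    ring
  refine ⟨?_, ?_, ?_⟩
  · -- nonnegativity
    intro u v
    rw [hval u v]
    split_ifs with h1 h2 h3
    · linarith [hpos u v]
    · linarith [hpos u v]
    · have hk := hkey u h3.1 (by omega)
      have e : b u v = b u (i - u) := by rw [show v = i - u from by omega]
      linarith [hpos m (i - m)]
    · linarith [hpos u v]
  · -- support
    intro u v hcell
    have hc : ¬(1 ≤ u ∧ u ≤ m ∧ u + v = i + 1) ∧ ¬(1 ≤ u ∧ u ≤ m - 1 ∧ u + v = i) := by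
      constructor <;> (intro h; exact hcell (by unfold cellA; omega))
    rw [hval u v, hzero u v hcell, if_neg hc.1, if_neg hc.2]
    ring
  · -- ordering condition
    intro u v h1 h2 h3
    rw [hval (u + 1) (v - 1), hval u v]
    have hord' := hord u v h1 h2 h3
    have I1 : (if 1 ≤ u + 1 ∧ u + 1 ≤ m ∧ (u + 1) + (v - 1) = i + 1 then (1:ℤ) else 0)
        ≤ (if 1 ≤ u ∧ u ≤ m ∧ u + v = i + 1 then 1 else 0) := by
      split_ifs <;> omega
    by_cases hbad : u + v = i ∧ u = m - 1 ∧ 1 ≤ m - 1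
    · have e1 : b (u + 1) (v - 1) = b m (i - m) := by
        rw [show u + 1 = m from by omega, show v - 1 = i - m from by omega]
      have e2 : b u v = b (m - 1) (i - (m - 1)) := by
        rw [show u = m - 1 from by omega, show v = i - (m - 1) from by omega]
      have hk := hkey (m - 1) hbad.2.2 (by omega)
      have j1 : (if 1 ≤ u + 1 ∧ u + 1 ≤ m ∧ (u + 1) + (v - 1) = i + 1 then (1:ℤ) else 0) = 0 :=
        if_neg (by omega)
      have j2 : (if 1 ≤ u + 1 ∧ u + 1 ≤ m - 1 ∧ (u + 1) + (v - 1) = i then (1:ℤ) else 0) = 0 :=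
        if_neg (by omega)
      have j3 : (if 1 ≤ u ∧ u ≤ m ∧ u + v = i + 1 then (1:ℤ) else 0) = 0 :=
        if_neg (by omega)
      have j4 : (if 1 ≤ u ∧ u ≤ m - 1 ∧ u + v = i then (1:ℤ) else 0) = 1 :=
        if_pos (by omega)
      rw [j1, j2, j3, j4, e1, e2]
      linarith
    · have I2 : (if 1 ≤ u ∧ u ≤ m - 1 ∧ u + v = i then (1:ℤ) else 0)
          ≤ (if 1 ≤ u + 1 ∧ u + 1 ≤ m - 1 ∧ (u + 1) + (v - 1) = i then 1 else 0) := by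
        split_ifs <;> omega
      linarith
end

section
/- For every b ∈ 𝓑(∞) and i ∈ I: ε*_i(f̃*_i(b)) = ε*_i(b) + 1 and M*_i(f̃*_i(b)) = m*_i(b). -/
open Finset

section Aux

lemma gamsa_eq (b : ℤ → ℤ → ℤ) (i : ℤ) (h1 : b 0 i = 0) (h2 : b 0 (i+1) = 0) :
    ∀ k : ℤ, 0 ≤ k → GamSA b i k = b k (i+1-k) - b k (i-k) := by
  refine Int.le_induction ?_ ?_
  ·
    unfold GamSA
    rw [show Finset.Icc (1:ℤ) 0 = ∅ from Finset.Icc_eq_empty (by omega), Finset.sum_empty,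
      show i+1-(0:ℤ) = i+1 from by ring, show i-(0:ℤ) = i from by ring, h1, h2]
    ring
  · intro k hk ih
    have hins : Finset.Icc (1:ℤ) (k+1) = insert (k+1) (Finset.Icc 1 k) := by
      ext x; simp only [Finset.mem_Icc, Finset.mem_insert]; omega
    have hnm : (k+1) ∉ Finset.Icc (1:ℤ) k := by simp only [Finset.mem_Icc]; omega
    unfold GamSA at ih ⊢
    rw [hins, Finset.sum_insert hnm, ih]
    unfold dsA
    rw [show (k:ℤ)+1-1 = k from by ring, show i+1-(k+1) = i-k from by ring,
      show i-k+1 = i+1-k from by ring, show i-k-1 = i-(k+1) from by ring]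
    ring

lemma sum_part0 (n : ℕ) (i m v : ℤ) :
    ∑ s ∈ Finset.Icc (1:ℤ) m, (eA n s (i+1-s) 0 v - eA n (s-1) (i+1-s) 0 v) = 0 := by
  apply Finset.sum_eq_zero
  intro s hs
  obtain ⟨hs1, hs2⟩ := Finset.mem_Icc.mp hs
  have e1 : eA n s (i+1-s) 0 v = 0 := by
    unfold eA; rw [if_neg]; rintro ⟨h, -⟩; omega
  have e2 : eA n (s-1) (i+1-s) 0 v = 0 := by
    unfold eA; rw [if_neg]; rintro ⟨h, -, hc⟩
    have hc1 : 1 ≤ s - 1 := hc.1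
    omega
  rw [e1, e2]; ring

lemma sum_part1 (n : ℕ) (i m k : ℤ) (hin : i ≤ (n:ℤ)) (hk1 : 1 ≤ k) (hki : k ≤ i)
    (hmi : m ≤ i) :
    ∑ s ∈ Finset.Icc (1:ℤ) m, (eA n s (i+1-s) k (i+1-k) - eA n (s-1) (i+1-s) k (i+1-k))
      = if k ≤ m then 1 else 0 := by
  by_cases hkm : k ≤ m
  · rw [if_pos hkm]
    have h0 : ∀ s ∈ Finset.Icc (1:ℤ) m, s ≠ k →
        eA n s (i+1-s) k (i+1-k) - eA n (s-1) (i+1-s) k (i+1-k) = 0 := by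
      intro s hs hne
      have e1 : eA n s (i+1-s) k (i+1-k) = 0 := by
        unfold eA; rw [if_neg]; rintro ⟨h, -⟩; exact hne h.symm
      have e2 : eA n (s-1) (i+1-s) k (i+1-k) = 0 := by
        unfold eA; rw [if_neg]; rintro ⟨h1, h2, -⟩; omega
      rw [e1, e2]; ring
    have h1 : k ∉ Finset.Icc (1:ℤ) m →
        eA n k (i+1-k) k (i+1-k) - eA n (k-1) (i+1-k) k (i+1-k) = 0 := by
      intro h; exact absurd (Finset.mem_Icc.mpr ⟨hk1, hkm⟩) h
    rw [Finset.sum_eq_single k h0 h1]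
    have e1 : eA n k (i+1-k) k (i+1-k) = 1 := by
      unfold eA; rw [if_pos]; exact ⟨rfl, rfl, by unfold cellA; omega⟩
    have e2 : eA n (k-1) (i+1-k) k (i+1-k) = 0 := by
      unfold eA; rw [if_neg]; rintro ⟨h, -⟩; omega
    rw [e1, e2]; ring
  · rw [if_neg hkm]
    apply Finset.sum_eq_zero
    intro s hs
    obtain ⟨hs1, hs2⟩ := Finset.mem_Icc.mp hs
    have e1 : eA n s (i+1-s) k (i+1-k) = 0 := by
      unfold eA; rw [if_neg]; rintro ⟨h, -⟩; omega
    have e2 : eA n (s-1) (i+1-s) k (i+1-k) = 0 := by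
      unfold eA; rw [if_neg]; rintro ⟨h1, h2, -⟩; omega
    rw [e1, e2]; ring

lemma sum_part2 (n : ℕ) (i m k : ℤ) (hin : i ≤ (n:ℤ)) (hk1 : 1 ≤ k) (hki : k ≤ i)
    (hmi : m ≤ i) :
    ∑ s ∈ Finset.Icc (1:ℤ) m, (eA n s (i+1-s) k (i-k) - eA n (s-1) (i+1-s) k (i-k))
      = -(if k + 1 ≤ m then 1 else 0) := by
  by_cases hkm : k + 1 ≤ m
  · rw [if_pos hkm]
    have h0 : ∀ s ∈ Finset.Icc (1:ℤ) m, s ≠ k + 1 →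
        eA n s (i+1-s) k (i-k) - eA n (s-1) (i+1-s) k (i-k) = 0 := by
      intro s hs hne
      have e1 : eA n s (i+1-s) k (i-k) = 0 := by
        unfold eA; rw [if_neg]; rintro ⟨h1, h2, -⟩; omega
      have e2 : eA n (s-1) (i+1-s) k (i-k) = 0 := by
        unfold eA; rw [if_neg]; rintro ⟨h1, h2, -⟩; omega
      rw [e1, e2]; ring
    have h1 : k + 1 ∉ Finset.Icc (1:ℤ) m →
        eA n (k+1) (i+1-(k+1)) k (i-k) - eA n ((k+1)-1) (i+1-(k+1)) k (i-k) = 0 := by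
      intro h; exact absurd (Finset.mem_Icc.mpr ⟨by omega, hkm⟩) h
    rw [Finset.sum_eq_single (k+1) h0 h1]
    have e1 : eA n (k+1) (i+1-(k+1)) k (i-k) = 0 := by
      unfold eA; rw [if_neg]; rintro ⟨h1, -⟩; omega
    have e2 : eA n ((k+1)-1) (i+1-(k+1)) k (i-k) = 1 := by
      unfold eA; rw [if_pos]
      refine ⟨by omega, by omega, ?_⟩
      unfold cellA; omega
    rw [e1, e2]; ring
  · rw [if_neg hkm, neg_zero]
    apply Finset.sum_eq_zero
    intro s hs
    obtain ⟨hs1, hs2⟩ := Finset.mem_Icc.mp hs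
    have e1 : eA n s (i+1-s) k (i-k) = 0 := by
      unfold eA; rw [if_neg]; rintro ⟨h1, h2, -⟩; omega
    have e2 : eA n (s-1) (i+1-s) k (i-k) = 0 := by
      unfold eA; rw [if_neg]; rintro ⟨h1, h2, -⟩; omega
    rw [e1, e2]; ring

end Aux

/-- `ε*_i(f̃*_i(b)) = ε*_i(b) + 1` and `M*_i(f̃*_i(b)) = m*_i(b)`. -/
theorem stmt5 (n : ℕ) (hn : 1 ≤ n) (i : ℤ) (hi1 : 1 ≤ i) (hin : i ≤ (n : ℤ))
    (b : ℤ → ℤ → ℤ) (hb : b ∈ BinfA n) :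
    epsSA (fSA n b i) i = epsSA b i + 1 ∧ MSA (fSA n b i) i = mSA b i := by
  obtain ⟨hpos, hzero, hord⟩ := hb
  have hb0 : ∀ t : ℤ, b 0 t = 0 := fun t => hzero 0 t (fun hc => by
    have := hc.1; omega)
  have hIne : (Finset.Icc (1:ℤ) i).Nonempty := ⟨1, Finset.mem_Icc.mpr ⟨le_refl 1, hi1⟩⟩
  have hne : ((Finset.Icc (1:ℤ) i).image (GamSA b i)).Nonempty := hIne.image _
  have hEeq : epsSA b i = ((Finset.Icc (1:ℤ) i).image (GamSA b i)).max' hne := by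
    unfold epsSA; rw [← Finset.coe_max' hne]; rfl
  have hE_le : ∀ k, 1 ≤ k → k ≤ i → GamSA b i k ≤ epsSA b i := fun k h1 h2 => by
    rw [hEeq]
    exact Finset.le_max' _ _ (Finset.mem_image_of_mem _ (Finset.mem_Icc.mpr ⟨h1, h2⟩))
  have hE_mem : epsSA b i ∈ (Finset.Icc (1:ℤ) i).image (GamSA b i) := by
    rw [hEeq]; exact Finset.max'_mem _ _
  obtain ⟨k0, hk0I, hk0E⟩ := Finset.mem_image.mp hE_mem
  have hFne : ((Finset.Icc (1:ℤ) i).filter (fun k => GamSA b i k = epsSA b i)).Nonempty :=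
    ⟨k0, Finset.mem_filter.mpr ⟨hk0I, hk0E⟩⟩
  have hmeq : mSA b i
      = (((Finset.Icc (1:ℤ) i).filter (fun k => GamSA b i k = epsSA b i)).min' hFne) := by
    unfold mSA; rw [← Finset.coe_min' hFne]; rfl
  have hm_mem : mSA b i ∈ (Finset.Icc (1:ℤ) i).filter (fun k => GamSA b i k = epsSA b i) := by
    rw [hmeq]; exact Finset.min'_mem _ _
  obtain ⟨hmIcc, hmE⟩ := Finset.mem_filter.mp hm_mem
  obtain ⟨hm1, hmi⟩ := Finset.mem_Icc.mp hmIcc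
  have hm_min : ∀ k, 1 ≤ k → k ≤ i → GamSA b i k = epsSA b i → mSA b i ≤ k := fun k h1 h2 he => by
    have hkmem : k ∈ (Finset.Icc (1:ℤ) i).filter (fun j => GamSA b i j = epsSA b i) :=
      Finset.mem_filter.mpr ⟨Finset.mem_Icc.mpr ⟨h1, h2⟩, he⟩
    rw [hmeq]
    exact Finset.min'_le _ _ hkmem
  have hGam : ∀ k : ℤ, 0 ≤ k → GamSA b i k = b k (i+1-k) - b k (i-k) :=
    gamsa_eq b i (hb0 i) (hb0 (i+1))
  have hfval : ∀ u v : ℤ, fSA n b i u v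
      = b u v + ∑ s ∈ Finset.Icc (1:ℤ) (mSA b i),
          (eA n s (i+1-s) u v - eA n (s-1) (i+1-s) u v) := fun u v => rfl
  have hc0 : ∀ v : ℤ, fSA n b i 0 v = 0 := by
    intro v
    rw [hfval 0 v, hb0 v, sum_part0 n i (mSA b i) v]
    ring
  have hGam' : ∀ k : ℤ, 1 ≤ k → k ≤ i →
      GamSA (fSA n b i) i k
        = GamSA b i k + (if k ≤ mSA b i then 1 else 0) + (if k + 1 ≤ mSA b i then 1 else 0) := by
    intro k h1 h2
    rw [gamsa_eq (fSA n b i) i (hc0 i) (hc0 (i+1)) k (by omega),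
      hfval k (i+1-k), hfval k (i-k),
      sum_part1 n i (mSA b i) k hin h1 h2 hmi,
      sum_part2 n i (mSA b i) k hin h1 h2 hmi,
      hGam k (by omega)]
    ring
  have hGm' : GamSA (fSA n b i) i (mSA b i) = epsSA b i + 1 := by
    rw [hGam' (mSA b i) hm1 hmi, hmE, if_pos (le_refl _), if_neg (by omega)]
    ring
  have hle' : ∀ k, 1 ≤ k → k ≤ i → GamSA (fSA n b i) i k ≤ epsSA b i + 1 := by
    intro k h1 h2
    rw [hGam' k h1 h2]
    have hle := hE_le k h1 h2
    by_cases hc1 : k + 1 ≤ mSA b i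
    · have hne' : GamSA b i k ≠ epsSA b i := fun he => by
        have := hm_min k h1 h2 he; omega
      rw [if_pos (by omega), if_pos hc1]
      omega
    · by_cases hc2 : k ≤ mSA b i
      · rw [if_pos hc2, if_neg hc1]
        omega
      · rw [if_neg hc2, if_neg hc1]
        omega
  have hne2 : ((Finset.Icc (1:ℤ) i).image (GamSA (fSA n b i) i)).Nonempty := hIne.image _
  have hEeq2 : epsSA (fSA n b i) i
      = ((Finset.Icc (1:ℤ) i).image (GamSA (fSA n b i) i)).max' hne2 := by
    unfold epsSA; rw [← Finset.coe_max' hne2]; rfl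
  have hEnew : epsSA (fSA n b i) i = epsSA b i + 1 := by
    apply le_antisymm
    · rw [hEeq2]
      apply Finset.max'_le
      intro y hy
      obtain ⟨k, hkI, hke⟩ := Finset.mem_image.mp hy
      obtain ⟨h1, h2⟩ := Finset.mem_Icc.mp hkI
      rw [← hke]; exact hle' k h1 h2
    · calc epsSA b i + 1 = GamSA (fSA n b i) i (mSA b i) := hGm'.symm
        _ ≤ epsSA (fSA n b i) i := by
            rw [hEeq2]
            exact Finset.le_max' _ _ (Finset.mem_image_of_mem _ hmIcc)
  have hFne2 : ((Finset.Icc (1:ℤ) i).filter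
      (fun k => GamSA (fSA n b i) i k = epsSA (fSA n b i) i)).Nonempty :=
    ⟨mSA b i, Finset.mem_filter.mpr ⟨hmIcc, by rw [hGm', hEnew]⟩⟩
  have hMeq : MSA (fSA n b i) i
      = (((Finset.Icc (1:ℤ) i).filter
          (fun k => GamSA (fSA n b i) i k = epsSA (fSA n b i) i)).max' hFne2) := by
    unfold MSA; rw [← Finset.coe_max' hFne2]; rfl
  refine ⟨hEnew, ?_⟩
  rw [hMeq]
  apply le_antisymm
  · apply Finset.max'_le
    intro y hy
    obtain ⟨hyI, hye⟩ := Finset.mem_filter.mp hy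
    obtain ⟨h1, h2⟩ := Finset.mem_Icc.mp hyI
    by_contra hgt
    push_neg at hgt
    have h3 : GamSA (fSA n b i) i y = GamSA b i y := by
      rw [hGam' y h1 h2, if_neg (by omega), if_neg (by omega)]; ring
    have h4 := hE_le y h1 h2
    rw [hEnew] at hye
    omega
  · exact Finset.le_max' _ _ (Finset.mem_filter.mpr ⟨hmIcc, by rw [hGm', hEnew]⟩)
end

section
/- Let b ∈ 𝓑(∞) (type B_n). For every 1 ≤ i ≤ n−1 one has Γ*^{(i)}_{m*_i(b)}(f̃*_i(b)) = Γ*^{(i)}_{m*_i(b)}(b) + 1, and for i = n one has Γ*_{m*_n(b)}(f̃*_n(b)) = Γ*_{m*_n(b)}(b) + 1. -/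
open Finset

/-- Membership of `(s,t)` in the index set `𝓘 = {(s,t) : 1 ≤ s ≤ n, t ∈ I}`
for type `Bₙ`. -/
def cellB (n : ℕ) (s t : ℤ) : Prop :=
  1 ≤ s ∧ s ≤ (n : ℤ) ∧ 1 ≤ t ∧ t ≤ (n : ℤ)

instance (n : ℕ) (s t : ℤ) : Decidable (cellB n s t) := by
  unfold cellB; infer_instance

/-- The type-`Bₙ` polyhedral realization `𝓑(∞)`: nonnegative families vanishing
outside `𝓘` satisfying the three chains of inequalities
`b_{1,k} ≥ b_{2,k−1} ≥ … ≥ b_{k,1}` (`1 ≤ k ≤ n−1`),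
`b_{k,n} ≥ b_{k+1,n−1} ≥ … ≥ b_{n,k}` (`1 ≤ k ≤ n`), and
`b_{k,n−k+1} ≥ b_{k,n−k+2} ≥ … ≥ b_{k,n}` (`2 ≤ k ≤ n`). -/
def BinfB (n : ℕ) : Set (ℤ → ℤ → ℤ) :=
  {b | (∀ s t, 0 ≤ b s t) ∧
       (∀ s t, ¬ cellB n s t → b s t = 0) ∧
       (∀ k j : ℤ, 1 ≤ k → k ≤ (n : ℤ) - 1 → 1 ≤ j → j ≤ k - 1 →
          b (j + 1) (k - j) ≤ b j (k + 1 - j)) ∧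
       (∀ k j : ℤ, 1 ≤ k → k ≤ (n : ℤ) → 0 ≤ j → j ≤ (n : ℤ) - k - 1 →
          b (k + j + 1) ((n : ℤ) - j - 1) ≤ b (k + j) ((n : ℤ) - j)) ∧
       (∀ k t : ℤ, 2 ≤ k → k ≤ (n : ℤ) → (n : ℤ) - k + 1 ≤ t → t ≤ (n : ℤ) - 1 →
          b k (t + 1) ≤ b k t)}

/-- The standard basis family `e_{s,t}` (zero if `(s,t) ∉ 𝓘`). -/
def eB (n : ℕ) (s t : ℤ) : ℤ → ℤ → ℤ :=
  fun u v => if u = s ∧ v = t ∧ cellB n s t then 1 else 0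

/-- `∂_{s,t}(b)` for type `Bₙ`. -/
def dB (n : ℕ) (b : ℤ → ℤ → ℤ) (s t : ℤ) : ℤ :=
  if t = (n : ℤ) then b s t - 2 * b (s + 1) (t - 1) + b (s + 1) t
  else b s t - b s (t + 1) - b (s + 1) (t - 1) + b (s + 1) t

/-- `∂*_{s,t}(b)` for type `Bₙ`. -/
def dsB (n : ℕ) (b : ℤ → ℤ → ℤ) (s t : ℤ) : ℤ :=
  if t = (n : ℤ) then b (s - 1) t - 2 * b s (t - 1) + b s t
  else b (s - 1) t - b (s - 1) (t + 1) - b s (t - 1) + b s t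

/-- `Γ^{(i)}_k(b) = Σ_{s=k}^{n} ∂_{s,i}(b)`. -/
noncomputable def GamB (n : ℕ) (b : ℤ → ℤ → ℤ) (i k : ℤ) : ℤ :=
  ∑ s ∈ Finset.Icc k (n : ℤ), dB n b s i

/-- `ε_i(b) = max_{1≤k≤n} Γ^{(i)}_k(b)`. -/
noncomputable def epsB (n : ℕ) (b : ℤ → ℤ → ℤ) (i : ℤ) : ℤ :=
  WithBot.unbotD 0 (((Finset.Icc (1 : ℤ) (n : ℤ)).image (GamB n b i)).max)

/-- `m_i(b)`: the smallest `k` attaining `ε_i(b)`. -/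
noncomputable def mB (n : ℕ) (b : ℤ → ℤ → ℤ) (i : ℤ) : ℤ :=
  WithTop.untopD 0 (((Finset.Icc (1 : ℤ) (n : ℤ)).filter
      (fun k => GamB n b i k = epsB n b i)).min)

/-- `f̃_i(b) = b + e_{m_i(b),i}`. -/
noncomputable def fB (n : ℕ) (b : ℤ → ℤ → ℤ) (i : ℤ) : ℤ → ℤ → ℤ :=
  fun u v => b u v + eB n (mB n b i) i u v

/-- `Γ*^{(i)}_k(b) = Σ_{t=1}^{k} ∂*_{t,i+1−t}(b)` for `1 ≤ i ≤ n−1`. -/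
noncomputable def GamSiB (n : ℕ) (b : ℤ → ℤ → ℤ) (i k : ℤ) : ℤ :=
  ∑ t ∈ Finset.Icc (1 : ℤ) k, dsB n b t (i + 1 - t)

/-- `ε*_i(b) = max_{1≤k≤i} Γ*^{(i)}_k(b)` for `1 ≤ i ≤ n−1`. -/
noncomputable def epsSiB (n : ℕ) (b : ℤ → ℤ → ℤ) (i : ℤ) : ℤ :=
  WithBot.unbotD 0 (((Finset.Icc (1 : ℤ) i).image (GamSiB n b i)).max)

/-- `m*_i(b)`: the smallest `k` attaining `ε*_i(b)`, for `1 ≤ i ≤ n−1`. -/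
noncomputable def mSiB (n : ℕ) (b : ℤ → ℤ → ℤ) (i : ℤ) : ℤ :=
  WithTop.untopD 0 (((Finset.Icc (1 : ℤ) i).filter
      (fun k => GamSiB n b i k = epsSiB n b i)).min)

/-- `f̃*_i(b) = b + Σ_{s=1}^{m*_i(b)} (e_{s,i+1−s} − e_{s−1,i+1−s})` for `1 ≤ i ≤ n−1`. -/
noncomputable def fSiB (n : ℕ) (b : ℤ → ℤ → ℤ) (i : ℤ) : ℤ → ℤ → ℤ :=
  fun u v => b u v +
    ∑ s ∈ Finset.Icc (1 : ℤ) (mSiB n b i),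
      (eB n s (i + 1 - s) u v - eB n (s - 1) (i + 1 - s) u v)

/-- `lam` is a strict partition contained in the staircase `δₙ = (n, n−1, …, 1)`
(recorded as the function `s ↦ lam s` giving the length of row `s`). -/
def StrictInDelta (n : ℕ) (lam : ℤ → ℤ) : Prop :=
  (∀ s, 0 ≤ lam s) ∧
  (∀ s, s < 1 ∨ (n : ℤ) < s → lam s = 0) ∧
  (∀ s, 1 ≤ s → s ≤ (n : ℤ) → lam s ≤ (n : ℤ) + 1 - s) ∧
  (∀ s, 1 ≤ s → lam (s + 1) ≤ lam s) ∧
  (∀ s, 1 ≤ s → lam (s + 1) ≠ 0 → lam (s + 1) < lam s)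

/-- The cell `(s,t)` belongs to the partition `lam`. -/
def memCell (lam : ℤ → ℤ) (s t : ℤ) : Prop :=
  1 ≤ s ∧ 1 ≤ t ∧ t ≤ lam s

/-- `Γ*_λ(b) = Σ_{(s,t)∈λ, t=1} ∂*_{s,n}(b) + Σ_{(s,t)∈λ, t≥2} 2 ∂*_{s+t−1,n−t}(b)`. -/
noncomputable def GamLam (n : ℕ) (b : ℤ → ℤ → ℤ) (lam : ℤ → ℤ) : ℤ :=
  ∑ s ∈ Finset.Icc (1 : ℤ) (n : ℤ), ∑ t ∈ Finset.Icc (1 : ℤ) (n : ℤ),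
    if t ≤ lam s then
      (if t = 1 then dsB n b s (n : ℤ) else 2 * dsB n b (s + t - 1) ((n : ℤ) - t))
    else 0

/-- `ε*_n(b)`: the maximum of `Γ*_λ(b)` over nonempty strict partitions `λ ⊆ δₙ`. -/
noncomputable def epsSnB (n : ℕ) (b : ℤ → ℤ → ℤ) : ℤ :=
  sSup {x : ℤ | ∃ lam : ℤ → ℤ,
    StrictInDelta n lam ∧ 1 ≤ lam 1 ∧ x = GamLam n b lam}

/-- `m*_n(b)`: the componentwise minimum (intersection) of all maximizing `λ`. -/
noncomputable def mSnB (n : ℕ) (b : ℤ → ℤ → ℤ) : ℤ → ℤ :=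
  fun s => sInf {x : ℤ | ∃ lam : ℤ → ℤ,
    StrictInDelta n lam ∧ 1 ≤ lam 1 ∧ GamLam n b lam = epsSnB n b ∧ x = lam s}

/-- `f̃*_n(b) = b + Σ_{(s,t)∈m*_n(b), t=1} (e_{s,n} − e_{s−1,n})
 + Σ_{(s,t)∈m*_n(b), t≥2} (e_{s+t−1,n−t} − e_{s+t−2,n−t})`. -/
noncomputable def fSnB (n : ℕ) (b : ℤ → ℤ → ℤ) : ℤ → ℤ → ℤ :=
  fun u v => b u v +
    ∑ s ∈ Finset.Icc (1 : ℤ) (n : ℤ), ∑ t ∈ Finset.Icc (1 : ℤ) (n : ℤ),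
      (if t ≤ mSnB n b s then
        (if t = 1 then eB n s (n : ℤ) u v - eB n (s - 1) (n : ℤ) u v
         else eB n (s + t - 1) ((n : ℤ) - t) u v - eB n (s + t - 2) ((n : ℤ) - t) u v)
       else 0)


section Aux

open Finset

lemma eB_zero {n : ℕ} {s t u v : ℤ} (h : ¬(u = s ∧ v = t ∧ cellB n s t)) :
    eB n s t u v = 0 := if_neg h

lemma eB_one {n : ℕ} {s t u v : ℤ} (h : u = s ∧ v = t ∧ cellB n s t) :
    eB n s t u v = 1 := if_pos h

lemma tele (f : ℤ → ℤ) {m : ℤ} (hm : 0 ≤ m) :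
    ∑ s ∈ Finset.Icc (1:ℤ) m, (f s - f (s-1)) = f m - f 0 := by
  refine Int.le_induction (motive := fun m _ => ∑ s ∈ Finset.Icc (1:ℤ) m, (f s - f (s-1)) = f m - f 0) ?_ ?_ m hm
  · simp
  · intro k hk ih
    have hins : Finset.Icc (1:ℤ) (k+1) = insert (k+1) (Finset.Icc 1 k) := by
      ext x; simp only [Finset.mem_Icc, Finset.mem_insert]; omega
    have hnot : (k+1) ∉ Finset.Icc (1:ℤ) k := by simp
    rw [hins, Finset.sum_insert hnot, ih]
    have a1 : k + 1 - 1 = k := by ring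
    rw [a1]; ring

lemma tele2 (f : ℤ → ℤ) {a m : ℤ} (hm : a - 1 ≤ m) :
    ∑ t ∈ Finset.Icc a m, (f (t+1) - f t) = f (m+1) - f a := by
  refine Int.le_induction (motive := fun m _ => ∑ t ∈ Finset.Icc a m, (f (t+1) - f t) = f (m+1) - f a) ?_ ?_ m hm
  · simp only [show Finset.Icc a (a-1) = ∅ from Finset.Icc_eq_empty (by omega),
      Finset.sum_empty, show a-1+1 = a from by ring, sub_self]
  · intro k hk ih
    have hins : Finset.Icc a (k+1) = insert (k+1) (Finset.Icc a k) := by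
      ext x; simp only [Finset.mem_Icc, Finset.mem_insert]; omega
    have hnot : (k+1) ∉ Finset.Icc a k := by simp
    rw [hins, Finset.sum_insert hnot, ih]
    ring

lemma gamsi (n : ℕ) (c : ℤ → ℤ → ℤ) (i : ℤ) (hi2 : i ≤ (n:ℤ) - 1) {k : ℤ} (hk : 0 ≤ k) :
    GamSiB n c i k = c 0 i - c 0 (i+1) - c k (i-k) + c k (i+1-k) := by
  refine Int.le_induction (motive := fun k _ => GamSiB n c i k = c 0 i - c 0 (i+1) - c k (i-k) + c k (i+1-k)) ?_ ?_ k hk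
  ·
    simp only [GamSiB]
    norm_num
  · intro k hk ih
    simp only [GamSiB] at ih ⊢
    have hins : Finset.Icc (1:ℤ) (k+1) = insert (k+1) (Finset.Icc 1 k) := by
      ext x; simp only [Finset.mem_Icc, Finset.mem_insert]; omega
    have hnot : (k+1) ∉ Finset.Icc (1:ℤ) k := by simp
    rw [hins, Finset.sum_insert hnot, ih]
    simp only [dsB]
    rw [if_neg (by omega : ¬ (i + 1 - (k+1) = (n:ℤ)))]
    have a1 : k + 1 - 1 = k := by ring
    have a2 : i + 1 - (k+1) = i - k := by ring
    rw [a1, a2]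
    have a3 : i - k + 1 = i + 1 - k := by ring
    have a4 : i - k - 1 = i - (k+1) := by ring
    rw [a3, a4]
    ring

lemma mSiB_spec (n : ℕ) (b : ℤ → ℤ → ℤ) (i : ℤ) (hi : 1 ≤ i) :
    1 ≤ mSiB n b i ∧ mSiB n b i ≤ i := by
  classical
  set F := (Finset.Icc (1:ℤ) i).filter (fun k => GamSiB n b i k = epsSiB n b i) with hF
  have hne : F.Nonempty := by
    have h1 : (Finset.Icc (1:ℤ) i).Nonempty := ⟨1, by simp [hi]⟩
    have himg : ((Finset.Icc (1:ℤ) i).image (GamSiB n b i)).Nonempty := h1.image _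
    obtain ⟨a, ha⟩ := Finset.max_of_nonempty himg
    have hmem := Finset.mem_of_max ha
    rw [Finset.mem_image] at hmem
    obtain ⟨k, hk, hgk⟩ := hmem
    refine ⟨k, Finset.mem_filter.2 ⟨hk, ?_⟩⟩
    rw [epsSiB, ha, WithBot.unbotD_coe, hgk]
  obtain ⟨m, hm⟩ := Finset.min_of_nonempty hne
  have hmm : mSiB n b i = m := by
    rw [mSiB, ← hF, hm, WithTop.untopD_coe]
  have hmF : m ∈ F := Finset.mem_of_min hm
  rw [hF, Finset.mem_filter, Finset.mem_Icc] at hmF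
  omega

lemma part1 (n : ℕ) (b : ℤ → ℤ → ℤ) (i : ℤ) (hi : 1 ≤ i) (hi2 : i ≤ (n:ℤ) - 1) :
    GamSiB n (fSiB n b i) i (mSiB n b i) = GamSiB n b i (mSiB n b i) + 1 := by
  obtain ⟨hm1, hm2⟩ := mSiB_spec n b i hi
  set m := mSiB n b i with hmdef
  have h0 : (0:ℤ) ≤ m := by omega
  rw [gamsi n (fSiB n b i) i hi2 h0, gamsi n b i hi2 h0]
  have hD : ∀ u v : ℤ, fSiB n b i u v
      = b u v + ∑ s ∈ Finset.Icc (1:ℤ) m, (eB n s (i+1-s) u v - eB n (s-1) (i+1-s) u v) :=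
    fun u v => rfl
  rw [hD, hD, hD, hD]
  have e1 : ∑ s ∈ Finset.Icc (1:ℤ) m, (eB n s (i+1-s) 0 i - eB n (s-1) (i+1-s) 0 i) = 0 := by
    refine Finset.sum_eq_zero fun s hs => ?_
    simp only [Finset.mem_Icc] at hs
    rw [eB_zero (by simp only [cellB]; omega), eB_zero (by simp only [cellB]; omega), sub_self]
  have e2 : ∑ s ∈ Finset.Icc (1:ℤ) m, (eB n s (i+1-s) 0 (i+1) - eB n (s-1) (i+1-s) 0 (i+1)) = 0 := by
    refine Finset.sum_eq_zero fun s hs => ?_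
    simp only [Finset.mem_Icc] at hs
    rw [eB_zero (by simp only [cellB]; omega), eB_zero (by simp only [cellB]; omega), sub_self]
  have e3 : ∑ s ∈ Finset.Icc (1:ℤ) m, (eB n s (i+1-s) m (i-m) - eB n (s-1) (i+1-s) m (i-m)) = 0 := by
    refine Finset.sum_eq_zero fun s hs => ?_
    simp only [Finset.mem_Icc] at hs
    rw [eB_zero (by simp only [cellB]; omega), eB_zero (by simp only [cellB]; omega), sub_self]
  have e4 : ∑ s ∈ Finset.Icc (1:ℤ) m, (eB n s (i+1-s) m (i+1-m) - eB n (s-1) (i+1-s) m (i+1-m)) = 1 := by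
    rw [Finset.sum_sub_distrib]
    have p1 : ∑ s ∈ Finset.Icc (1:ℤ) m, eB n s (i+1-s) m (i+1-m) = 1 := by
      have hcongr : ∀ s ∈ Finset.Icc (1:ℤ) m,
          eB n s (i+1-s) m (i+1-m) = if s = m then 1 else 0 := by
        intro s hs
        simp only [Finset.mem_Icc] at hs
        by_cases h : s = m
        · subst h
          rw [eB_one ⟨rfl, rfl, by simp only [cellB]; omega⟩, if_pos rfl]
        · rw [eB_zero (by simp only [cellB]; omega), if_neg h]
      rw [Finset.sum_congr rfl hcongr, Finset.sum_ite_eq' (Finset.Icc (1:ℤ) m) m (fun _ => (1:ℤ)),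
        if_pos (by simp only [Finset.mem_Icc]; omega)]
    have p2 : ∑ s ∈ Finset.Icc (1:ℤ) m, eB n (s-1) (i+1-s) m (i+1-m) = 0 := by
      refine Finset.sum_eq_zero fun s hs => ?_
      simp only [Finset.mem_Icc] at hs
      exact eB_zero (by simp only [cellB]; omega)
    rw [p1, p2]; ring
  rw [e1, e2, e3, e4]; ring

end Aux


section Part2

open Finset

/-- The increment `Δ` added by `f̃*ₙ`, for a general row-length function `lam`. -/
noncomputable def DeltaN (n : ℕ) (lam : ℤ → ℤ) : ℤ → ℤ → ℤ :=
  fun u v => ∑ s ∈ Finset.Icc (1 : ℤ) (n : ℤ), ∑ t ∈ Finset.Icc (1 : ℤ) (n : ℤ),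
      (if t ≤ lam s then
        (if t = 1 then eB n s (n : ℤ) u v - eB n (s - 1) (n : ℤ) u v
         else eB n (s + t - 1) ((n : ℤ) - t) u v - eB n (s + t - 2) ((n : ℤ) - t) u v)
       else 0)

/-- Column lengths of `lam`. -/
noncomputable def RZ (n : ℕ) (lam : ℤ → ℤ) (t : ℤ) : ℤ :=
  sSup {x : ℤ | x = 0 ∨ (1 ≤ x ∧ x ≤ (n : ℤ) ∧ t ≤ lam x)}

/-- Corner indicator. -/
noncomputable def PP (n : ℕ) (lam : ℤ → ℤ) (t : ℤ) : ℤ :=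
  if 3 ≤ t ∧ 1 ≤ RZ n lam t ∧ RZ n lam (t - 1) ≤ RZ n lam t then 1 else 0

structure PartHyp (n : ℕ) (lam : ℤ → ℤ) : Prop where
  n2 : 2 ≤ n
  zero : ∀ s, s < 1 ∨ (n : ℤ) < s → lam s = 0
  delta : ∀ s, 1 ≤ s → s ≤ (n : ℤ) → lam s ≤ (n : ℤ) + 1 - s
  mono : ∀ s, 1 ≤ s → lam (s + 1) ≤ lam s
  one : 1 ≤ lam 1

variable {n : ℕ} {lam : ℤ → ℤ}

lemma lam_anti (hp : PartHyp n lam) {a b : ℤ} (ha : 1 ≤ a) (hab : a ≤ b) :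
    lam b ≤ lam a := by
  refine Int.le_induction (motive := fun b _ => lam b ≤ lam a) ?_ ?_ b hab
  · exact le_refl _
  · intro k hk ih
    exact le_trans (hp.mono k (by omega)) ih

lemma RZ_set_ne (n : ℕ) (lam : ℤ → ℤ) (t : ℤ) :
    {x : ℤ | x = 0 ∨ (1 ≤ x ∧ x ≤ (n : ℤ) ∧ t ≤ lam x)}.Nonempty := ⟨0, Or.inl rfl⟩

lemma RZ_set_bdd (n : ℕ) (lam : ℤ → ℤ) (t : ℤ) :
    BddAbove {x : ℤ | x = 0 ∨ (1 ≤ x ∧ x ≤ (n : ℤ) ∧ t ≤ lam x)} := by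
  refine ⟨(n : ℤ), ?_⟩
  rintro x (rfl | ⟨h1, h2, h3⟩)
  · positivity
  · exact h2

lemma RZ_nonneg (n : ℕ) (lam : ℤ → ℤ) (t : ℤ) : 0 ≤ RZ n lam t :=
  le_csSup (RZ_set_bdd n lam t) (Or.inl rfl)

lemma RZ_le_n (n : ℕ) (lam : ℤ → ℤ) (t : ℤ) : RZ n lam t ≤ (n : ℤ) := by
  refine csSup_le (RZ_set_ne n lam t) ?_
  rintro x (rfl | ⟨h1, h2, h3⟩)
  · positivity
  · exact h2

lemma RZ_le {s t : ℤ} (h1 : 1 ≤ s) (h2 : s ≤ (n : ℤ)) (h3 : t ≤ lam s) :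
    s ≤ RZ n lam t :=
  le_csSup (RZ_set_bdd n lam t) (Or.inr ⟨h1, h2, h3⟩)

lemma RZ_spec (hp : PartHyp n lam) {s t : ℤ} (hs : 1 ≤ s) (ht : 1 ≤ t) :
    t ≤ lam s ↔ s ≤ RZ n lam t := by
  constructor
  · intro h
    have hsn : s ≤ (n : ℤ) := by
      by_contra h'
      have := hp.zero s (Or.inr (by omega))
      omega
    exact RZ_le hs hsn h
  · intro h
    rcases Int.csSup_mem (RZ_set_ne n lam t) (RZ_set_bdd n lam t) with h0 | ⟨h1, h2, h3⟩
    · rw [RZ] at h; omega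
    · rw [RZ] at h
      exact le_trans h3 (lam_anti hp hs h)

lemma RZ_bound (hp : PartHyp n lam) {t : ℤ} (ht : 1 ≤ t) (ht2 : t ≤ (n : ℤ)) :
    RZ n lam t ≤ (n : ℤ) + 1 - t := by
  refine csSup_le (RZ_set_ne n lam t) ?_
  rintro x (rfl | ⟨h1, h2, h3⟩)
  · omega
  · have := hp.delta x h1 h2
    omega

lemma RZ_anti (hp : PartHyp n lam) {t t' : ℤ} (h : t ≤ t') :
    RZ n lam t' ≤ RZ n lam t := by
  refine csSup_le (RZ_set_ne n lam t') ?_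
  rintro x (rfl | ⟨h1, h2, h3⟩)
  · exact RZ_nonneg n lam t
  · exact le_csSup (RZ_set_bdd n lam t) (Or.inr ⟨h1, h2, le_trans h h3⟩)

lemma RZ_gt (hp : PartHyp n lam) {t : ℤ} (ht : (n : ℤ) < t) : RZ n lam t = 0 := by
  refine le_antisymm ?_ (RZ_nonneg n lam t)
  refine csSup_le (RZ_set_ne n lam t) ?_
  rintro x (rfl | ⟨h1, h2, h3⟩)
  · exact le_refl 0
  · have := hp.delta x h1 h2
    omega

lemma RZ1_pos (hp : PartHyp n lam) : 1 ≤ RZ n lam 1 := by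
  have h2 : (2 : ℤ) ≤ (n : ℤ) := by exact_mod_cast hp.n2
  exact RZ_le (le_refl 1) (by omega) hp.one

lemma filter_eq (hp : PartHyp n lam) {t : ℤ} (ht : 1 ≤ t) :
    (Finset.Icc (1 : ℤ) (n : ℤ)).filter (fun s => t ≤ lam s)
      = Finset.Icc 1 (RZ n lam t) := by
  ext s
  simp only [Finset.mem_filter, Finset.mem_Icc]
  constructor
  · rintro ⟨⟨h1, h2⟩, h3⟩
    exact ⟨h1, (RZ_spec hp h1 ht).1 h3⟩
  · rintro ⟨h1, h2⟩
    exact ⟨⟨h1, le_trans h2 (RZ_le_n n lam t)⟩, (RZ_spec hp h1 ht).2 h2⟩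

lemma double_sum_eq (hp : PartHyp n lam) (g : ℤ → ℤ → ℤ) :
    (∑ s ∈ Finset.Icc (1 : ℤ) (n : ℤ), ∑ t ∈ Finset.Icc (1 : ℤ) (n : ℤ),
        if t ≤ lam s then g s t else 0)
      = ∑ t ∈ Finset.Icc (1 : ℤ) (n : ℤ), ∑ s ∈ Finset.Icc (1 : ℤ) (RZ n lam t), g s t := by
  rw [Finset.sum_comm]
  refine Finset.sum_congr rfl fun t ht => ?_
  simp only [Finset.mem_Icc] at ht
  rw [← Finset.sum_filter, filter_eq hp ht.1]

lemma delta_eq (hp : PartHyp n lam) (u v : ℤ) :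
    DeltaN n lam u v = ∑ t ∈ Finset.Icc (1 : ℤ) (n : ℤ),
      (if t = 1 then eB n (RZ n lam 1) (n : ℤ) u v
       else eB n (RZ n lam t + t - 1) ((n : ℤ) - t) u v - eB n (t - 1) ((n : ℤ) - t) u v) := by
  rw [show DeltaN n lam u v = ∑ s ∈ Finset.Icc (1 : ℤ) (n : ℤ), ∑ t ∈ Finset.Icc (1 : ℤ) (n : ℤ),
      (if t ≤ lam s then
        (if t = 1 then eB n s (n : ℤ) u v - eB n (s - 1) (n : ℤ) u v
         else eB n (s + t - 1) ((n : ℤ) - t) u v - eB n (s + t - 2) ((n : ℤ) - t) u v)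
       else 0) from rfl]
  rw [double_sum_eq hp]
  refine Finset.sum_congr rfl fun t ht => ?_
  simp only [Finset.mem_Icc] at ht
  by_cases h1 : t = 1
  · subst h1
    rw [Finset.sum_congr rfl (fun s _ => if_pos rfl), if_pos rfl]
    rw [tele (fun s => eB n s (n : ℤ) u v) (RZ_nonneg n lam 1)]
    rw [eB_zero (n := n) (s := 0) (t := (n : ℤ)) (u := u) (v := v)
      (by simp only [cellB]; omega), sub_zero]
  · simp only [if_neg h1]
    have h2 : 2 ≤ t := by omega
    calc ∑ s ∈ Finset.Icc (1 : ℤ) (RZ n lam t),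
          (eB n (s + t - 1) ((n : ℤ) - t) u v - eB n (s + t - 2) ((n : ℤ) - t) u v)
        = ∑ s ∈ Finset.Icc (1 : ℤ) (RZ n lam t),
          ((fun x => eB n (x + t - 1) ((n : ℤ) - t) u v) s
            - (fun x => eB n (x + t - 1) ((n : ℤ) - t) u v) (s - 1)) := by
          refine Finset.sum_congr rfl fun s _ => ?_
          simp only
          rw [show s - 1 + t - 1 = s + t - 2 from by ring]
      _ = eB n (RZ n lam t + t - 1) ((n : ℤ) - t) u v - eB n (0 + t - 1) ((n : ℤ) - t) u v :=
          tele _ (RZ_nonneg n lam t)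
      _ = eB n (RZ n lam t + t - 1) ((n : ℤ) - t) u v - eB n (t - 1) ((n : ℤ) - t) u v := by
          rw [show (0 : ℤ) + t - 1 = t - 1 from by ring]

lemma D_le0 (hp : PartHyp n lam) (u v : ℤ) (hv : v ≤ 0) : DeltaN n lam u v = 0 := by
  rw [delta_eq hp]
  refine Finset.sum_eq_zero fun t ht => ?_
  simp only [Finset.mem_Icc] at ht
  by_cases h1 : t = 1
  · rw [if_pos h1, eB_zero (by simp only [cellB]; omega)]
  · rw [if_neg h1, eB_zero (by simp only [cellB]; omega),
      eB_zero (by simp only [cellB]; omega), sub_self]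

lemma D_n (hp : PartHyp n lam) (u : ℤ) :
    DeltaN n lam u (n : ℤ) = if u = RZ n lam 1 then 1 else 0 := by
  have h2 : (2 : ℤ) ≤ (n : ℤ) := by exact_mod_cast hp.n2
  rw [delta_eq hp]
  rw [Finset.sum_eq_single_of_mem 1 (Finset.mem_Icc.mpr ⟨le_refl _, by omega⟩)
    (fun t ht hne => ?_)]
  · rw [if_pos rfl]
    by_cases hu : u = RZ n lam 1
    · have hc1 := RZ1_pos hp
      have hc2 := RZ_le_n n lam 1
      rw [if_pos hu, eB_one ⟨hu, rfl, by simp only [cellB]; omega⟩]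
    · rw [if_neg hu, eB_zero (fun hc => hu hc.1)]
  · simp only [Finset.mem_Icc] at ht
    rw [if_neg hne, eB_zero (by simp only [cellB]; omega),
      eB_zero (by simp only [cellB]; omega), sub_self]

lemma D_n1 (hp : PartHyp n lam) (u : ℤ) : DeltaN n lam u ((n : ℤ) - 1) = 0 := by
  rw [delta_eq hp]
  refine Finset.sum_eq_zero fun t ht => ?_
  simp only [Finset.mem_Icc] at ht
  by_cases h1 : t = 1
  · subst h1
    rw [if_pos rfl, eB_zero (by simp only [cellB]; omega)]
  · rw [if_neg h1, eB_zero (by simp only [cellB]; omega),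
      eB_zero (by simp only [cellB]; omega), sub_self]

lemma D_tau (hp : PartHyp n lam) {τ : ℤ} (h2 : 2 ≤ τ) (hτ : τ ≤ (n : ℤ) - 1) (u : ℤ) :
    DeltaN n lam u ((n : ℤ) - τ) =
      if 1 ≤ RZ n lam τ then
        ((if u = RZ n lam τ + τ - 1 then (1 : ℤ) else 0) - (if u = τ - 1 then 1 else 0))
      else 0 := by
  rw [delta_eq hp]
  rw [Finset.sum_eq_single_of_mem τ (Finset.mem_Icc.mpr ⟨by omega, by omega⟩)
    (fun t ht hne => ?_)]
  · rw [if_neg (by omega : ¬ τ = 1)]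
    by_cases hR : 1 ≤ RZ n lam τ
    · have hbd := RZ_bound hp (by omega : (1:ℤ) ≤ τ) (by omega : τ ≤ (n : ℤ))
      rw [if_pos hR]
      congr 1
      · by_cases hu : u = RZ n lam τ + τ - 1
        · rw [if_pos hu, eB_one ⟨hu, rfl, by simp only [cellB]; omega⟩]
        · rw [if_neg hu, eB_zero (fun hc => hu hc.1)]
      · by_cases hu : u = τ - 1
        · rw [if_pos hu, eB_one ⟨hu, rfl, by simp only [cellB]; omega⟩]
        · rw [if_neg hu, eB_zero (fun hc => hu hc.1)]
    · rw [if_neg hR]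
      have h0 : RZ n lam τ = 0 := le_antisymm (by omega) (RZ_nonneg n lam τ)
      rw [h0, show (0 : ℤ) + τ - 1 = τ - 1 from by ring, sub_self]
  · simp only [Finset.mem_Icc] at ht
    by_cases h1 : t = 1
    · subst h1
      rw [if_pos rfl, eB_zero (by simp only [cellB]; omega)]
    · rw [if_neg h1, eB_zero (by simp only [cellB]; omega),
        eB_zero (by simp only [cellB]; omega), sub_self]

lemma sum_ind_Icc (lo hi a : ℤ) :
    ∑ s ∈ Finset.Icc lo hi, (if s = a then (1 : ℤ) else 0)
      = if lo ≤ a ∧ a ≤ hi then 1 else 0 := by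
  rw [Finset.sum_ite_eq' (Finset.Icc lo hi) a (fun _ => (1 : ℤ))]
  exact if_congr Finset.mem_Icc rfl rfl

lemma PPn_zero (hp : PartHyp n lam) (hsp : lam 1 = (n : ℤ) → lam 2 = (n : ℤ) - 1) :
    PP n lam (n : ℤ) = 0 := by
  have h2 : (2 : ℤ) ≤ (n : ℤ) := by exact_mod_cast hp.n2
  rw [PP, if_neg ?_]
  rintro ⟨h3, hR, hle⟩
  have hl1 : (n : ℤ) ≤ lam 1 := (RZ_spec hp (le_refl 1) (by omega)).2 hR
  have hl1' : lam 1 ≤ (n : ℤ) := by have := hp.delta 1 (le_refl 1) (by omega); omega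
  have hl2 : lam 2 = (n : ℤ) - 1 := hsp (by omega)
  have hR2 : 2 ≤ RZ n lam (n - 1) :=
    (RZ_spec hp (by omega : (1:ℤ) ≤ 2) (by omega : (1:ℤ) ≤ (n:ℤ) - 1)).1 (by omega)
  have hRb := RZ_bound hp (by omega : (1:ℤ) ≤ (n:ℤ)) (le_refl (n : ℤ))
  omega

lemma colS1 (hp : PartHyp n lam) :
    ∑ s ∈ Finset.Icc (1 : ℤ) (RZ n lam 1), dsB n (DeltaN n lam) s (n : ℤ) = 1 := by
  have key : ∀ s ∈ Finset.Icc (1 : ℤ) (RZ n lam 1),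
      dsB n (DeltaN n lam) s (n : ℤ)
        = (if s - 1 = RZ n lam 1 then (1:ℤ) else 0) + (if s = RZ n lam 1 then 1 else 0) := by
    intro s hs
    simp only [dsB]
    rw [if_pos trivial, D_n hp, D_n hp, D_n1 hp]
    ring
  rw [Finset.sum_congr rfl key, Finset.sum_add_distrib]
  have p1 : ∑ s ∈ Finset.Icc (1 : ℤ) (RZ n lam 1),
      (if s - 1 = RZ n lam 1 then (1:ℤ) else 0) = 0 := by
    rw [Finset.sum_congr rfl (fun s _ => if_congr (by omega : (s - 1 = RZ n lam 1) ↔ (s = RZ n lam 1 + 1)) rfl rfl),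
      sum_ind_Icc]
    rw [if_neg (by omega)]
  have p2 : ∑ s ∈ Finset.Icc (1 : ℤ) (RZ n lam 1),
      (if s = RZ n lam 1 then (1:ℤ) else 0) = 1 := by
    rw [sum_ind_Icc, if_pos ⟨RZ1_pos hp, le_refl _⟩]
  rw [p1, p2]
  norm_num

lemma colS (hp : PartHyp n lam) (hsp : lam 1 = (n : ℤ) → lam 2 = (n : ℤ) - 1)
    {t : ℤ} (h2 : 2 ≤ t) (htn : t ≤ (n : ℤ)) :
    ∑ s ∈ Finset.Icc (1 : ℤ) (RZ n lam t), 2 * dsB n (DeltaN n lam) (s + t - 1) ((n : ℤ) - t)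
      = 2 * (PP n lam (t + 1) - PP n lam t) := by
  have h2n : (2 : ℤ) ≤ (n : ℤ) := by exact_mod_cast hp.n2
  by_cases hRt : 1 ≤ RZ n lam t
  swap
  · have h0 : RZ n lam t = 0 := le_antisymm (by omega) (RZ_nonneg n lam t)
    have hR1 : RZ n lam (t + 1) = 0 :=
      le_antisymm (le_trans (RZ_anti hp (by omega)) (le_of_eq h0)) (RZ_nonneg n lam (t+1))
    rw [h0]
    rw [show Finset.Icc (1:ℤ) 0 = ∅ from Finset.Icc_eq_empty (by omega), Finset.sum_empty]
    rw [PP, PP, if_neg (by omega), if_neg (by omega)]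
    ring
  · have hds : ∀ s ∈ Finset.Icc (1 : ℤ) (RZ n lam t),
        2 * dsB n (DeltaN n lam) (s + t - 1) ((n : ℤ) - t)
        = 2 * (DeltaN n lam (s + t - 2) ((n : ℤ) - t)
            - DeltaN n lam (s + t - 2) ((n : ℤ) - t + 1)
            - DeltaN n lam (s + t - 1) ((n : ℤ) - t - 1)
            + DeltaN n lam (s + t - 1) ((n : ℤ) - t)) := by
      intro s _
      simp only [dsB]
      rw [if_neg (by omega : ¬ ((n : ℤ) - t = (n : ℤ)))]
      rw [show s + t - 1 - 1 = s + t - 2 from by ring]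
    rw [Finset.sum_congr rfl hds, ← Finset.mul_sum]
    simp only [Finset.sum_add_distrib, Finset.sum_sub_distrib]
    have hA : ∑ s ∈ Finset.Icc (1 : ℤ) (RZ n lam t), DeltaN n lam (s + t - 2) ((n : ℤ) - t)
        = if t ≤ (n : ℤ) - 1 then -1 else 0 := by
      by_cases ht1 : t ≤ (n : ℤ) - 1
      · rw [if_pos ht1]
        have key : ∀ s ∈ Finset.Icc (1 : ℤ) (RZ n lam t),
            DeltaN n lam (s + t - 2) ((n : ℤ) - t)
            = (if s = RZ n lam t + 1 then (1:ℤ) else 0) - (if s = 1 then 1 else 0) := by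
          intro s _
          rw [D_tau hp h2 ht1, if_pos hRt]
          rw [if_congr (by omega : (s + t - 2 = RZ n lam t + t - 1) ↔ (s = RZ n lam t + 1)) rfl rfl,
            if_congr (by omega : (s + t - 2 = t - 1) ↔ (s = 1)) rfl rfl]
        rw [Finset.sum_congr rfl key, Finset.sum_sub_distrib, sum_ind_Icc, sum_ind_Icc]
        rw [if_neg (by omega), if_pos (by omega)]
        ring
      · rw [if_neg ht1]
        refine Finset.sum_eq_zero fun s _ => D_le0 hp _ _ (by omega)
    have hD : ∑ s ∈ Finset.Icc (1 : ℤ) (RZ n lam t), DeltaN n lam (s + t - 1) ((n : ℤ) - t)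
        = if t ≤ (n : ℤ) - 1 then 1 else 0 := by
      by_cases ht1 : t ≤ (n : ℤ) - 1
      · rw [if_pos ht1]
        have key : ∀ s ∈ Finset.Icc (1 : ℤ) (RZ n lam t),
            DeltaN n lam (s + t - 1) ((n : ℤ) - t)
            = (if s = RZ n lam t then (1:ℤ) else 0) - (if s = 0 then 1 else 0) := by
          intro s _
          rw [D_tau hp h2 ht1, if_pos hRt]
          rw [if_congr (by omega : (s + t - 1 = RZ n lam t + t - 1) ↔ (s = RZ n lam t)) rfl rfl,
            if_congr (by omega : (s + t - 1 = t - 1) ↔ (s = 0)) rfl rfl]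
        rw [Finset.sum_congr rfl key, Finset.sum_sub_distrib, sum_ind_Icc, sum_ind_Icc]
        rw [if_pos (by omega), if_neg (by omega)]
        ring
      · rw [if_neg ht1]
        refine Finset.sum_eq_zero fun s _ => D_le0 hp _ _ (by omega)
    have hB : ∑ s ∈ Finset.Icc (1 : ℤ) (RZ n lam t), DeltaN n lam (s + t - 2) ((n : ℤ) - t + 1)
        = PP n lam t := by
      by_cases ht3 : 3 ≤ t
      · have hR1 : 1 ≤ RZ n lam (t - 1) := le_trans hRt (RZ_anti hp (by omega))
        have key : ∀ s ∈ Finset.Icc (1 : ℤ) (RZ n lam t),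
            DeltaN n lam (s + t - 2) ((n : ℤ) - t + 1)
            = (if s = RZ n lam (t - 1) then (1:ℤ) else 0) - (if s = 0 then 1 else 0) := by
          intro s _
          rw [show (n : ℤ) - t + 1 = (n : ℤ) - (t - 1) from by ring]
          rw [D_tau hp (by omega) (by omega), if_pos hR1]
          rw [if_congr (by omega : (s + t - 2 = RZ n lam (t-1) + (t-1) - 1) ↔ (s = RZ n lam (t-1))) rfl rfl,
            if_congr (by omega : (s + t - 2 = t - 1 - 1) ↔ (s = 0)) rfl rfl]
        rw [Finset.sum_congr rfl key, Finset.sum_sub_distrib, sum_ind_Icc, sum_ind_Icc]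
        rw [if_neg (by omega : ¬ ((1:ℤ) ≤ 0 ∧ (0:ℤ) ≤ RZ n lam t))]
        rw [PP]
        by_cases hc : RZ n lam (t - 1) ≤ RZ n lam t
        · rw [if_pos ⟨hR1, hc⟩, if_pos ⟨ht3, hRt, hc⟩]
          ring
        · rw [if_neg (by omega), if_neg (by omega)]
          ring
      · have ht2 : t = 2 := by omega
        subst ht2
        have key : ∀ s ∈ Finset.Icc (1 : ℤ) (RZ n lam 2),
            DeltaN n lam (s + 2 - 2) ((n : ℤ) - 2 + 1) = 0 := by
          intro s _
          rw [show (n : ℤ) - 2 + 1 = (n : ℤ) - 1 from by ring]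
          exact D_n1 hp _
        rw [Finset.sum_congr rfl key, Finset.sum_const, smul_zero]
        rw [PP, if_neg (by omega)]
    have hC : ∑ s ∈ Finset.Icc (1 : ℤ) (RZ n lam t), DeltaN n lam (s + t - 1) ((n : ℤ) - t - 1)
        = -(PP n lam (t + 1)) := by
      by_cases ht2' : t ≤ (n : ℤ) - 2
      · by_cases hR1 : 1 ≤ RZ n lam (t + 1)
        · have hanti : RZ n lam (t + 1) ≤ RZ n lam t := RZ_anti hp (by omega)
          have key : ∀ s ∈ Finset.Icc (1 : ℤ) (RZ n lam t),
              DeltaN n lam (s + t - 1) ((n : ℤ) - t - 1)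
              = (if s = RZ n lam (t + 1) + 1 then (1:ℤ) else 0) - (if s = 1 then 1 else 0) := by
            intro s _
            rw [show (n : ℤ) - t - 1 = (n : ℤ) - (t + 1) from by ring]
            rw [D_tau hp (by omega) (by omega), if_pos hR1]
            rw [if_congr (by omega : (s + t - 1 = RZ n lam (t+1) + (t+1) - 1) ↔ (s = RZ n lam (t+1) + 1)) rfl rfl,
              if_congr (by omega : (s + t - 1 = t + 1 - 1) ↔ (s = 1)) rfl rfl]
          rw [Finset.sum_congr rfl key, Finset.sum_sub_distrib, sum_ind_Icc, sum_ind_Icc]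
          rw [if_pos (by omega : (1:ℤ) ≤ 1 ∧ (1:ℤ) ≤ RZ n lam t)]
          rw [PP]
          by_cases hc : RZ n lam t ≤ RZ n lam (t + 1)
          · rw [if_neg (by omega), if_pos ⟨by omega, hR1, by rw [show t + 1 - 1 = t from by ring]; omega⟩]
            ring
          · rw [if_pos (by omega), if_neg ?_]
            · ring
            · rw [show t + 1 - 1 = t from by ring]
              rintro ⟨e1, e2, e3⟩
              omega
        · have key : ∀ s ∈ Finset.Icc (1 : ℤ) (RZ n lam t),
              DeltaN n lam (s + t - 1) ((n : ℤ) - t - 1) = 0 := by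
            intro s _
            rw [show (n : ℤ) - t - 1 = (n : ℤ) - (t + 1) from by ring]
            rw [D_tau hp (by omega) (by omega), if_neg hR1]
          rw [Finset.sum_congr rfl key, Finset.sum_const, smul_zero]
          rw [PP, if_neg (fun hc => hR1 hc.2.1)]
          ring
      · have hz : ∑ s ∈ Finset.Icc (1 : ℤ) (RZ n lam t),
            DeltaN n lam (s + t - 1) ((n : ℤ) - t - 1) = 0 :=
          Finset.sum_eq_zero fun s _ => D_le0 hp _ _ (by omega)
        rw [hz]
        by_cases htn' : t = (n : ℤ) - 1
        · have : PP n lam (t + 1) = 0 := by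
            rw [show t + 1 = (n : ℤ) from by omega]
            exact PPn_zero hp hsp
          rw [this]; ring
        · have hgt : RZ n lam (t + 1) = 0 := RZ_gt hp (by omega)
          rw [PP, if_neg (by rw [hgt]; rintro ⟨e1, e2, e3⟩; omega)]
          ring
    rw [hA, hB, hC, hD]
    split_ifs with h <;> ring

lemma gamlam_delta (hp : PartHyp n lam) (hsp : lam 1 = (n : ℤ) → lam 2 = (n : ℤ) - 1) :
    GamLam n (DeltaN n lam) lam = 1 := by
  have h2n : (2 : ℤ) ≤ (n : ℤ) := by exact_mod_cast hp.n2
  rw [show GamLam n (DeltaN n lam) lam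
      = ∑ s ∈ Finset.Icc (1 : ℤ) (n : ℤ), ∑ t ∈ Finset.Icc (1 : ℤ) (n : ℤ),
        (if t ≤ lam s then
          (if t = 1 then dsB n (DeltaN n lam) s (n : ℤ)
           else 2 * dsB n (DeltaN n lam) (s + t - 1) ((n : ℤ) - t))
         else 0) from rfl]
  rw [double_sum_eq hp]
  rw [show Finset.Icc (1 : ℤ) (n : ℤ) = insert 1 (Finset.Icc 2 (n : ℤ)) from by
    ext x; simp only [Finset.mem_Icc, Finset.mem_insert]; omega]
  rw [Finset.sum_insert (by simp)]
  have hfirst : ∑ s ∈ Finset.Icc (1 : ℤ) (RZ n lam 1),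
      (if (1 : ℤ) = 1 then dsB n (DeltaN n lam) s (n : ℤ)
       else 2 * dsB n (DeltaN n lam) (s + 1 - 1) ((n : ℤ) - 1)) = 1 := by
    rw [Finset.sum_congr rfl (fun s _ => if_pos rfl)]
    exact colS1 hp
  rw [hfirst]
  have hrest : ∑ t ∈ Finset.Icc (2 : ℤ) (n : ℤ), ∑ s ∈ Finset.Icc (1 : ℤ) (RZ n lam t),
      (if t = 1 then dsB n (DeltaN n lam) s (n : ℤ)
       else 2 * dsB n (DeltaN n lam) (s + t - 1) ((n : ℤ) - t)) = 0 := by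
    have step : ∀ t ∈ Finset.Icc (2 : ℤ) (n : ℤ),
        (∑ s ∈ Finset.Icc (1 : ℤ) (RZ n lam t),
          (if t = 1 then dsB n (DeltaN n lam) s (n : ℤ)
           else 2 * dsB n (DeltaN n lam) (s + t - 1) ((n : ℤ) - t)))
        = 2 * (PP n lam (t + 1) - PP n lam t) := by
      intro t ht
      simp only [Finset.mem_Icc] at ht
      rw [Finset.sum_congr rfl (fun s _ => if_neg (by omega : ¬ t = 1))]
      exact colS hp hsp ht.1 ht.2
    rw [Finset.sum_congr rfl step, ← Finset.mul_sum]
    rw [show (∑ t ∈ Finset.Icc (2 : ℤ) (n : ℤ), (PP n lam (t + 1) - PP n lam t))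
        = PP n lam ((n : ℤ) + 1) - PP n lam 2 from tele2 (PP n lam) (by omega)]
    have e1 : PP n lam ((n : ℤ) + 1) = 0 := by
      have := RZ_gt hp (by omega : (n : ℤ) < (n : ℤ) + 1)
      rw [PP, if_neg (by rw [this]; rintro ⟨e1, e2, e3⟩; omega)]
    have e2 : PP n lam 2 = 0 := by
      rw [PP, if_neg (by rintro ⟨e1, e2, e3⟩; omega)]
    rw [e1, e2]
    ring
  rw [hrest]
  norm_num

lemma dsB_add (n : ℕ) (b d : ℤ → ℤ → ℤ) (s t : ℤ) :
    dsB n (fun u v => b u v + d u v) s t = dsB n b s t + dsB n d s t := by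
  simp only [dsB]
  split_ifs <;> ring

lemma gamlam_add (n : ℕ) (lam : ℤ → ℤ) (b d : ℤ → ℤ → ℤ) :
    GamLam n (fun u v => b u v + d u v) lam = GamLam n b lam + GamLam n d lam := by
  simp only [GamLam, ← Finset.sum_add_distrib]
  refine Finset.sum_congr rfl fun s _ => ?_
  refine Finset.sum_congr rfl fun t _ => ?_
  rw [dsB_add, dsB_add]
  split_ifs <;> ring

end Part2


section Plumb

open Finset

lemma mSnB_hyp (n : ℕ) (hn : 2 ≤ n) (b : ℤ → ℤ → ℤ) (hb : b ∈ BinfB n) :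
    PartHyp n (mSnB n b) ∧ (mSnB n b 1 = (n : ℤ) → mSnB n b 2 = (n : ℤ) - 1) := by
  classical
  have h2n : (2 : ℤ) ≤ (n : ℤ) := by exact_mod_cast hn
  set lam₀ : ℤ → ℤ := fun s => if s = 1 then (1 : ℤ) else 0 with hlam₀def
  have hlam₀ : StrictInDelta n lam₀ ∧ 1 ≤ lam₀ 1 := by
    refine ⟨⟨?_, ?_, ?_, ?_, ?_⟩, ?_⟩
    · intro s; simp only [hlam₀def]; split_ifs <;> omega
    · intro s hs; simp only [hlam₀def]; rw [if_neg (by omega)]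
    · intro s h1 h2; simp only [hlam₀def]; split_ifs <;> omega
    · intro s h1; simp only [hlam₀def]; split_ifs <;> omega
    · intro s h1 hne; exfalso; apply hne; simp only [hlam₀def]; rw [if_neg (by omega)]
    · simp only [hlam₀def]; norm_num
  set Sset : Set ℤ := {x : ℤ | ∃ lam : ℤ → ℤ,
    StrictInDelta n lam ∧ 1 ≤ lam 1 ∧ x = GamLam n b lam} with hSdef
  have hSne : Sset.Nonempty := ⟨GamLam n b lam₀, lam₀, hlam₀.1, hlam₀.2, rfl⟩
  have hSbdd : BddAbove Sset := by
    refine ⟨∑ s ∈ Finset.Icc (1 : ℤ) (n : ℤ), ∑ t ∈ Finset.Icc (1 : ℤ) (n : ℤ),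
      |if t = 1 then dsB n b s (n : ℤ) else 2 * dsB n b (s + t - 1) ((n : ℤ) - t)|, ?_⟩
    rintro x ⟨lam, hst, h1, rfl⟩
    refine Finset.sum_le_sum fun s _ => Finset.sum_le_sum fun t _ => ?_
    split_ifs <;> first | exact le_abs_self _ | exact abs_nonneg _
  have heps : epsSnB n b ∈ Sset := Int.csSup_mem hSne hSbdd
  obtain ⟨lamM, hM1, hM2, hM3⟩ := heps
  have hmem : ∀ s : ℤ, ∃ lam : ℤ → ℤ, StrictInDelta n lam ∧ 1 ≤ lam 1 ∧
      GamLam n b lam = epsSnB n b ∧ mSnB n b s = lam s := by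
    intro s
    have hne : {x : ℤ | ∃ lam : ℤ → ℤ, StrictInDelta n lam ∧ 1 ≤ lam 1 ∧
        GamLam n b lam = epsSnB n b ∧ x = lam s}.Nonempty :=
      ⟨lamM s, lamM, hM1, hM2, hM3.symm, rfl⟩
    have hbdd : BddBelow {x : ℤ | ∃ lam : ℤ → ℤ, StrictInDelta n lam ∧ 1 ≤ lam 1 ∧
        GamLam n b lam = epsSnB n b ∧ x = lam s} := by
      refine ⟨0, ?_⟩
      rintro x ⟨lam, hst, _, _, rfl⟩
      exact hst.1 s
    exact Int.csInf_mem hne hbdd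
  have hlb : ∀ (s : ℤ) (lam : ℤ → ℤ), StrictInDelta n lam → 1 ≤ lam 1 →
      GamLam n b lam = epsSnB n b → mSnB n b s ≤ lam s := by
    intro s lam hst h1 hmax
    refine csInf_le ?_ ⟨lam, hst, h1, hmax, rfl⟩
    refine ⟨0, ?_⟩
    rintro x ⟨lam', hst', _, _, rfl⟩
    exact hst'.1 s
  have hge : ∀ s : ℤ, 0 ≤ mSnB n b s := by
    intro s
    obtain ⟨lam, hst, _, _, hx⟩ := hmem s
    rw [hx]; exact hst.1 s
  have hp : PartHyp n (mSnB n b) := by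
    refine ⟨hn, ?_, ?_, ?_, ?_⟩
    · intro s hs
      obtain ⟨lam, hst, _, _, hx⟩ := hmem s
      rw [hx]; exact hst.2.1 s hs
    · intro s h1 h2
      obtain ⟨lam, hst, _, _, hx⟩ := hmem s
      rw [hx]; exact hst.2.2.1 s h1 h2
    · intro s h1
      obtain ⟨lam, hst, hl1, hmax, hx⟩ := hmem s
      have := hlb (s + 1) lam hst hl1 hmax
      have h2 := hst.2.2.2.1 s h1
      omega
    · obtain ⟨lam, hst, hl1, hmax, hx⟩ := hmem 1
      rw [hx]; exact hl1
  refine ⟨hp, ?_⟩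
  intro h1n
  by_contra hne2
  obtain ⟨lam, hst, hl1, hmax, hx⟩ := hmem 2
  have hub2 : lam 2 ≤ (n : ℤ) - 1 := by
    have := hst.2.2.1 2 (by omega) (by omega)
    omega
  have hlt : lam 2 ≤ (n : ℤ) - 2 := by
    have := hge 2
    omega
  have hlam1 : lam 1 = (n : ℤ) := by
    have hA := hlb 1 lam hst hl1 hmax
    have hB := hst.2.2.1 1 (by omega) (by omega)
    omega
  set lam' : ℤ → ℤ := fun s => if s = 1 then (n : ℤ) - 1 else lam s with hl'def
  have hl'1 : lam' 1 = (n : ℤ) - 1 := by simp only [hl'def]; rw [if_pos trivial]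
  have hl's : ∀ s : ℤ, s ≠ 1 → lam' s = lam s := by
    intro s h; simp only [hl'def]; rw [if_neg h]
  have hst' : StrictInDelta n lam' := by
    refine ⟨?_, ?_, ?_, ?_, ?_⟩
    · intro s; simp only [hl'def]; split_ifs with h
      · omega
      · exact hst.1 s
    · intro s hs; simp only [hl'def]; split_ifs with h
      · omega
      · exact hst.2.1 s hs
    · intro s h1 h2; simp only [hl'def]; split_ifs with h
      · omega
      · exact hst.2.2.1 s h1 h2
    · intro s h1; simp only [hl'def]
      by_cases h : s = 1
      · subst h
        rw [if_neg (by omega : ¬ (1:ℤ) + 1 = 1), if_pos rfl,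
          show (1:ℤ) + 1 = 2 from by norm_num]
        omega
      · rw [if_neg (by omega : ¬ s + 1 = 1), if_neg h]
        exact hst.2.2.2.1 s h1
    · intro s h1 hne0; rw [hl's (s+1) (by omega)] at hne0 ⊢
      simp only [hl'def]
      by_cases h : s = 1
      · subst h
        rw [if_pos rfl, show (1:ℤ) + 1 = 2 from by norm_num]
        omega
      · rw [if_neg h]
        exact hst.2.2.2.2 s h1 hne0
  have hGdiff : GamLam n b lam - GamLam n b lam'
      = if (n : ℤ) = 1 then dsB n b 1 (n : ℤ)
        else 2 * dsB n b (1 + (n : ℤ) - 1) ((n : ℤ) - (n : ℤ)) := by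
    simp only [GamLam, ← Finset.sum_sub_distrib]
    have step : ∀ s ∈ Finset.Icc (1 : ℤ) (n : ℤ),
        (∑ t ∈ Finset.Icc (1 : ℤ) (n : ℤ),
          ((if t ≤ lam s then
              (if t = 1 then dsB n b s (n : ℤ) else 2 * dsB n b (s + t - 1) ((n : ℤ) - t))
            else 0)
          - (if t ≤ lam' s then
              (if t = 1 then dsB n b s (n : ℤ) else 2 * dsB n b (s + t - 1) ((n : ℤ) - t))
            else 0)))
        = (if s = 1 then (if (n : ℤ) = 1 then dsB n b 1 (n : ℤ)
            else 2 * dsB n b (1 + (n : ℤ) - 1) ((n : ℤ) - (n : ℤ))) else 0) := by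
      intro s hs
      by_cases h : s = 1
      · subst h
        rw [if_pos rfl]
        have inner : ∀ t ∈ Finset.Icc (1 : ℤ) (n : ℤ),
            ((if t ≤ lam 1 then
                (if t = 1 then dsB n b 1 (n : ℤ) else 2 * dsB n b (1 + t - 1) ((n : ℤ) - t))
              else 0)
            - (if t ≤ lam' 1 then
                (if t = 1 then dsB n b 1 (n : ℤ) else 2 * dsB n b (1 + t - 1) ((n : ℤ) - t))
              else 0))
            = (if t = (n : ℤ) then
                (if t = 1 then dsB n b 1 (n : ℤ) else 2 * dsB n b (1 + t - 1) ((n : ℤ) - t))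
              else 0) := by
          intro t ht
          simp only [Finset.mem_Icc] at ht
          rw [hlam1, hl'1]
          by_cases htn : t = (n : ℤ)
          · rw [if_pos htn, if_pos (show t ≤ (n : ℤ) by omega),
              if_neg (show ¬ t ≤ (n : ℤ) - 1 by omega), sub_zero]
          · rw [if_neg htn, if_pos (show t ≤ (n : ℤ) by omega),
              if_pos (show t ≤ (n : ℤ) - 1 by omega), sub_self]
        rw [Finset.sum_congr rfl inner, Finset.sum_ite_eq' (Finset.Icc (1:ℤ) (n:ℤ)) ((n:ℤ))]
        rw [if_pos (Finset.mem_Icc.mpr ⟨by omega, le_refl _⟩)]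
      · rw [if_neg h]
        refine Finset.sum_eq_zero fun t _ => ?_
        rw [hl's s h, sub_self]
    rw [Finset.sum_congr rfl step, Finset.sum_ite_eq' (Finset.Icc (1:ℤ) (n:ℤ)) (1 : ℤ)]
    rw [if_pos (Finset.mem_Icc.mpr ⟨le_refl _, by omega⟩)]
  have hT : GamLam n b lam - GamLam n b lam' = -(2 * b ((n : ℤ) - 1) 1) := by
    rw [hGdiff, if_neg (by omega : ¬ (n : ℤ) = 1)]
    rw [show (1 : ℤ) + (n : ℤ) - 1 = (n : ℤ) from by ring,
      show (n : ℤ) - (n : ℤ) = 0 from by ring]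
    simp only [dsB]
    rw [if_neg (by omega : ¬ (0 : ℤ) = (n : ℤ))]
    have hz := hb.2.1
    rw [hz ((n:ℤ) - 1) 0 (by simp only [cellB]; omega),
      hz ((n:ℤ)) (0 - 1) (by simp only [cellB]; omega),
      hz ((n:ℤ)) 0 (by simp only [cellB]; omega)]
    ring_nf
  have hbpos : 0 ≤ b ((n : ℤ) - 1) 1 := hb.1 _ _
  have hinS : GamLam n b lam' ∈ Sset := ⟨lam', hst', by omega, rfl⟩
  have hle' : GamLam n b lam' ≤ epsSnB n b := le_csSup hSbdd hinS
  have hmax' : GamLam n b lam' = epsSnB n b := by omega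
  have hfin := hlb 1 lam' hst' (by omega) hmax'
  rw [hl'1] at hfin
  omega

end Plumb

/-- `Γ*^{(i)}_{m*_i(b)}(f̃*_i(b)) = Γ*^{(i)}_{m*_i(b)}(b) + 1` for
`1 ≤ i ≤ n−1`, and `Γ*_{m*_n(b)}(f̃*_n(b)) = Γ*_{m*_n(b)}(b) + 1` (type `Bₙ`). -/
theorem stmt18 (n : ℕ) (hn : 2 ≤ n) (b : ℤ → ℤ → ℤ) (hb : b ∈ BinfB n) :
    (∀ i : ℤ, 1 ≤ i → i ≤ (n : ℤ) - 1 →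
        GamSiB n (fSiB n b i) i (mSiB n b i) = GamSiB n b i (mSiB n b i) + 1) ∧
    GamLam n (fSnB n b) (mSnB n b) = GamLam n b (mSnB n b) + 1 := by
  constructor
  · intro i hi hi2
    exact part1 n b i hi hi2
  · obtain ⟨hp, hsp⟩ := mSnB_hyp n hn b hb
    have hrw : GamLam n (fSnB n b) (mSnB n b)
        = GamLam n b (mSnB n b) + GamLam n (DeltaN n (mSnB n b)) (mSnB n b) := by
      rw [show fSnB n b = (fun u v => b u v + DeltaN n (mSnB n b) u v) from rfl]
      exact gamlam_add n (mSnB n b) b (DeltaN n (mSnB n b))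
    rw [hrw, gamlam_delta hp hsp]
end

section
/- For every i ∈ I and every b ∈ 𝓑(∞) (type B_n): jump_i(b) ≥ 0, and if jump_i(b) = 0 then f̃_i(b) = f̃*_i(b). -/
open Finset

lemma shiftSum (n : ℤ) (hn : 1 ≤ n) (f : ℤ → ℤ) :
    ∑ s ∈ Icc (1:ℤ) n, f (s+1) = ∑ s ∈ Icc (1:ℤ) n, f s - f 1 + f (n+1) := by
  have h1 : ∑ s ∈ Icc (1:ℤ) n, f (s+1) = ∑ s ∈ Icc (2:ℤ) (n+1), f s := by
    rw [show Icc (2:ℤ) (n+1) = (Icc (1:ℤ) n).map (addRightEmbedding 1) by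
      rw [map_add_right_Icc]; norm_num, Finset.sum_map]
    simp [addRightEmbedding]
  have e1 : Icc (1:ℤ) (n+1) = insert (n+1) (Icc 1 n) := by
    ext x; simp [Finset.mem_Icc]; omega
  have e2 : Icc (1:ℤ) (n+1) = insert 1 (Icc 2 (n+1)) := by
    ext x; simp [Finset.mem_Icc]; omega
  have m1 : (n+1 : ℤ) ∉ Icc (1:ℤ) n := by simp [Finset.mem_Icc]
  have m2 : (1:ℤ) ∉ Icc (2:ℤ) (n+1) := by simp
  have key : f 1 + ∑ s ∈ Icc (2:ℤ) (n+1), f s = f (n+1) + ∑ s ∈ Icc (1:ℤ) n, f s := by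
    rw [← Finset.sum_insert m2, ← Finset.sum_insert m1, ← e1, ← e2]
  rw [h1]; linarith

lemma sum_ind3 (n : ℤ) (g : ℤ → ℤ → ℤ) (hn : 1 ≤ n) :
    ∑ s ∈ Icc (1:ℤ) n, ∑ t ∈ Icc (1:ℤ) n,
      (if t ≤ (if s = 1 then (1:ℤ) else 0) then g s t else 0) = g 1 1 := by
  have h1mem : (1:ℤ) ∈ Icc (1:ℤ) n := Finset.mem_Icc.2 ⟨le_refl 1, hn⟩
  have inner : ∀ s ∈ Icc (1:ℤ) n, (∑ t ∈ Icc (1:ℤ) n,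
      (if t ≤ (if s = 1 then (1:ℤ) else 0) then g s t else 0))
      = if s = 1 then g s 1 else 0 := by
    intro s _
    by_cases hs : s = 1
    · have step : ∀ t ∈ Icc (1:ℤ) n,
          (if t ≤ (if s = 1 then (1:ℤ) else 0) then g s t else 0)
          = if t = 1 then g s t else 0 := by
        intro t ht
        simp only [Finset.mem_Icc] at ht
        rw [if_pos hs]
        by_cases h : t = 1
        · rw [if_pos h, if_pos (by omega)]
        · rw [if_neg h, if_neg (by omega)]
      rw [Finset.sum_congr rfl step, Finset.sum_ite_eq' (Icc (1:ℤ) n) 1 (g s),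
        if_pos h1mem, if_pos hs]
    · rw [if_neg hs, if_neg hs]
      apply Finset.sum_eq_zero
      intro t ht
      simp only [Finset.mem_Icc] at ht
      rw [if_neg (by omega)]
  rw [Finset.sum_congr rfl inner, Finset.sum_ite_eq' (Icc (1:ℤ) n) 1 (fun s => g s 1),
    if_pos h1mem]

lemma min_filter_one (a : ℤ) (ha : 1 ≤ a) (P : ℤ → Prop) [DecidablePred P] (hP : P 1) :
    WithTop.untopD 0 (((Finset.Icc (1 : ℤ) a).filter P).min) = 1 := by
  have h1 : (1:ℤ) ∈ (Finset.Icc (1 : ℤ) a).filter P := by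
    simp [Finset.mem_filter, Finset.mem_Icc, ha, hP]
  have hne : ((Finset.Icc (1 : ℤ) a).filter P).Nonempty := ⟨1, h1⟩
  rw [← Finset.coe_min' hne, WithTop.untopD_coe]
  refine le_antisymm (Finset.min'_le _ _ h1) (Finset.le_min' _ _ _ ?_)
  intro y hy
  exact (Finset.mem_Icc.1 (Finset.mem_filter.1 hy).1).1

lemma max_image_unbot' (a c : ℤ) (hac : a ≤ c) (f : ℤ → ℤ) :
    WithBot.unbotD 0 (((Finset.Icc a c).image f).max)
      = ((Finset.Icc a c).image f).max' (⟨f a, Finset.mem_image_of_mem f (Finset.mem_Icc.2 ⟨le_refl a, hac⟩)⟩) := by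
  rw [← Finset.coe_max' ⟨f a, Finset.mem_image_of_mem f (Finset.mem_Icc.2 ⟨le_refl a, hac⟩)⟩, WithBot.unbotD_coe]


/-- The Cartan matrix entry `a_{i,t}` of type `Bₙ`:
`a_{ii} = 2`, `a_{n,n−1} = −2`, `a_{it} = −1` for the other adjacent pairs, `0` else. -/
def cartanB (n : ℕ) (i t : ℤ) : ℤ :=
  if i = t then 2
  else if i = (n : ℤ) ∧ t = (n : ℤ) - 1 then -2
  else if t = i + 1 ∨ i = t + 1 then -1
  else 0

/-- `⟨h_i, wt(b)⟩ = −Σ_{s≥1, t∈I} a_{it} b_{s,t}` (supported in `1 ≤ s,t ≤ n`). -/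
noncomputable def hwtB (n : ℕ) (b : ℤ → ℤ → ℤ) (i : ℤ) : ℤ :=
  -∑ s ∈ Finset.Icc (1 : ℤ) (n : ℤ), ∑ t ∈ Finset.Icc (1 : ℤ) (n : ℤ),
      cartanB n i t * b s t

/-- `ε*_i(b)` for any `i ∈ I` (the partition version for `i = n`). -/
noncomputable def epsStarB (n : ℕ) (b : ℤ → ℤ → ℤ) (i : ℤ) : ℤ :=
  if i = (n : ℤ) then epsSnB n b else epsSiB n b i

/-- `f̃*_i(b)` for any `i ∈ I` (the partition version for `i = n`). -/
noncomputable def fStarB (n : ℕ) (b : ℤ → ℤ → ℤ) (i : ℤ) : ℤ → ℤ → ℤ :=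
  if i = (n : ℤ) then fSnB n b else fSiB n b i

/-- `jump_i(b) = ε_i(b) + ε*_i(b) + ⟨h_i, wt(b)⟩` for type `Bₙ`. -/
noncomputable def jumpB (n : ℕ) (b : ℤ → ℤ → ℤ) (i : ℤ) : ℤ :=
  epsB n b i + epsStarB n b i + hwtB n b i

/-- the specific partition `λ₀ = (1)` -/
lemma strict0 (n : ℕ) (hn : 2 ≤ n) : StrictInDelta n (fun s => if s = 1 then (1:ℤ) else 0) := by
  have hn' : (2:ℤ) ≤ (n:ℤ) := by exact_mod_cast hn
  refine ⟨?_, ?_, ?_, ?_, ?_⟩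
  · intro s; dsimp only; split_ifs <;> omega
  · intro s hs; dsimp only; split_ifs with h <;> omega
  · intro s h1 h2; dsimp only; split_ifs <;> omega
  · intro s hs; dsimp only; split_ifs <;> omega
  · intro s hs hne; exfalso; exact hne (if_neg (by omega))

lemma cart_row (n : ℕ) (b : ℤ → ℤ → ℤ) (i : ℤ) (hi1 : 1 ≤ i) (hi2 : i ≤ (n:ℤ) - 1)
    (hz : ∀ s t : ℤ, s ≤ 0 ∨ (n:ℤ) < s ∨ t ≤ 0 ∨ (n:ℤ) < t → b s t = 0) (s : ℤ) :
    ∑ t ∈ Icc (1:ℤ) (n:ℤ), cartanB n i t * b s t = 2 * b s i - b s (i-1) - b s (i+1) := by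
  have pw : ∀ t ∈ Icc (1:ℤ) (n:ℤ), cartanB n i t * b s t =
      (if t = i then 2 * b s t else 0) +
        ((if t = i-1 then -(b s t) else 0) + (if t = i+1 then -(b s t) else 0)) := by
    intro t ht
    simp only [Finset.mem_Icc] at ht
    unfold cartanB
    split_ifs <;> first | (exfalso; omega) | ring
  rw [Finset.sum_congr rfl pw, Finset.sum_add_distrib, Finset.sum_add_distrib,
    Finset.sum_ite_eq' _ i (fun t => 2 * b s t),
    Finset.sum_ite_eq' _ (i-1) (fun t => -(b s t)),
    Finset.sum_ite_eq' _ (i+1) (fun t => -(b s t))]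
  rw [if_pos (show i ∈ Icc (1:ℤ) (n:ℤ) from Finset.mem_Icc.2 ⟨hi1, by omega⟩),
    if_pos (show i + 1 ∈ Icc (1:ℤ) (n:ℤ) from Finset.mem_Icc.2 ⟨by omega, by omega⟩)]
  by_cases hc : (i-1) ∈ Icc (1:ℤ) (n:ℤ)
  · rw [if_pos hc]; ring
  · rw [if_neg hc]
    simp only [Finset.mem_Icc, not_and_or, not_le] at hc
    rw [hz s (i-1) (by omega)]; ring

lemma cart_row_n (n : ℕ) (hn : 2 ≤ n) (b : ℤ → ℤ → ℤ) (s : ℤ) :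
    ∑ t ∈ Icc (1:ℤ) (n:ℤ), cartanB n (n:ℤ) t * b s t = 2 * b s (n:ℤ) - 2 * b s ((n:ℤ)-1) := by
  have hn' : (2:ℤ) ≤ (n:ℤ) := by exact_mod_cast hn
  have pw : ∀ t ∈ Icc (1:ℤ) (n:ℤ), cartanB n (n:ℤ) t * b s t =
      (if t = (n:ℤ) then 2 * b s t else 0) + (if t = (n:ℤ)-1 then -(2 * b s t) else 0) := by
    intro t ht
    simp only [Finset.mem_Icc] at ht
    unfold cartanB
    split_ifs <;> first | (exfalso; omega) | ring
  rw [Finset.sum_congr rfl pw, Finset.sum_add_distrib,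
    Finset.sum_ite_eq' _ ((n:ℤ)) (fun t => 2 * b s t),
    Finset.sum_ite_eq' _ ((n:ℤ)-1) (fun t => -(2 * b s t)),
    if_pos (show (n:ℤ) ∈ Icc (1:ℤ) (n:ℤ) from Finset.mem_Icc.2 ⟨by omega, le_refl _⟩),
    if_pos (show (n:ℤ) - 1 ∈ Icc (1:ℤ) (n:ℤ) from Finset.mem_Icc.2 ⟨by omega, by omega⟩)]
  ring

lemma gam1_lt (n : ℕ) (b : ℤ → ℤ → ℤ) (i : ℤ) (hne : i ≠ (n:ℤ)) (hn' : 1 ≤ (n:ℤ))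
    (hz : ∀ s t : ℤ, s ≤ 0 ∨ (n:ℤ) < s ∨ t ≤ 0 ∨ (n:ℤ) < t → b s t = 0) :
    GamB n b i 1 = 2 * (∑ s ∈ Icc (1:ℤ) (n:ℤ), b s i)
      - (∑ s ∈ Icc (1:ℤ) (n:ℤ), b s (i+1)) - (∑ s ∈ Icc (1:ℤ) (n:ℤ), b s (i-1))
      + b 1 (i-1) - b 1 i := by
  unfold GamB
  have e : ∑ s ∈ Icc (1:ℤ) (n:ℤ), dB n b s i
      = (∑ s ∈ Icc (1:ℤ) (n:ℤ), b s i) - (∑ s ∈ Icc (1:ℤ) (n:ℤ), b s (i+1))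
        - (∑ s ∈ Icc (1:ℤ) (n:ℤ), b (s+1) (i-1)) + (∑ s ∈ Icc (1:ℤ) (n:ℤ), b (s+1) i) := by
    rw [← Finset.sum_sub_distrib, ← Finset.sum_sub_distrib, ← Finset.sum_add_distrib]
    exact Finset.sum_congr rfl fun s _ => by unfold dB; rw [if_neg hne]
  have s1 := shiftSum (n:ℤ) hn' (fun s => b s (i-1))
  have s2 := shiftSum (n:ℤ) hn' (fun s => b s i)
  beta_reduce at s1 s2
  rw [e, s1, s2, hz ((n:ℤ)+1) (i-1) (by omega), hz ((n:ℤ)+1) i (by omega)]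
  ring

lemma gam1_n (n : ℕ) (b : ℤ → ℤ → ℤ) (hn' : 1 ≤ (n:ℤ))
    (hz : ∀ s t : ℤ, s ≤ 0 ∨ (n:ℤ) < s ∨ t ≤ 0 ∨ (n:ℤ) < t → b s t = 0) :
    GamB n b (n:ℤ) 1 = 2 * (∑ s ∈ Icc (1:ℤ) (n:ℤ), b s (n:ℤ))
      - 2 * (∑ s ∈ Icc (1:ℤ) (n:ℤ), b s ((n:ℤ)-1))
      + 2 * b 1 ((n:ℤ)-1) - b 1 (n:ℤ) := by
  unfold GamB
  have e : ∑ s ∈ Icc (1:ℤ) (n:ℤ), dB n b s (n:ℤ)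
      = (∑ s ∈ Icc (1:ℤ) (n:ℤ), b s (n:ℤ))
        - 2 * (∑ s ∈ Icc (1:ℤ) (n:ℤ), b (s+1) ((n:ℤ)-1))
        + (∑ s ∈ Icc (1:ℤ) (n:ℤ), b (s+1) (n:ℤ)) := by
    rw [Finset.mul_sum, ← Finset.sum_sub_distrib, ← Finset.sum_add_distrib]
    exact Finset.sum_congr rfl fun s _ => by unfold dB; rw [if_pos rfl]
  have s1 := shiftSum (n:ℤ) hn' (fun s => b s ((n:ℤ)-1))
  have s2 := shiftSum (n:ℤ) hn' (fun s => b s (n:ℤ))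
  beta_reduce at s1 s2
  rw [e, s1, s2, hz ((n:ℤ)+1) ((n:ℤ)-1) (by omega), hz ((n:ℤ)+1) (n:ℤ) (by omega)]
  ring

lemma hwt_lt (n : ℕ) (b : ℤ → ℤ → ℤ) (i : ℤ) (hi1 : 1 ≤ i) (hi2 : i ≤ (n:ℤ) - 1)
    (hz : ∀ s t : ℤ, s ≤ 0 ∨ (n:ℤ) < s ∨ t ≤ 0 ∨ (n:ℤ) < t → b s t = 0) :
    hwtB n b i = -(2 * (∑ s ∈ Icc (1:ℤ) (n:ℤ), b s i)
      - (∑ s ∈ Icc (1:ℤ) (n:ℤ), b s (i-1)) - (∑ s ∈ Icc (1:ℤ) (n:ℤ), b s (i+1))) := by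
  unfold hwtB
  congr 1
  rw [Finset.mul_sum, ← Finset.sum_sub_distrib, ← Finset.sum_sub_distrib]
  exact Finset.sum_congr rfl fun s _ => cart_row n b i hi1 hi2 hz s

lemma hwt_n (n : ℕ) (hn : 2 ≤ n) (b : ℤ → ℤ → ℤ) :
    hwtB n b (n:ℤ) = -(2 * (∑ s ∈ Icc (1:ℤ) (n:ℤ), b s (n:ℤ))
      - 2 * (∑ s ∈ Icc (1:ℤ) (n:ℤ), b s ((n:ℤ)-1))) := by
  unfold hwtB
  congr 1
  rw [Finset.mul_sum, Finset.mul_sum, ← Finset.sum_sub_distrib]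
  exact Finset.sum_congr rfl fun s _ => cart_row_n n hn b s

lemma gamsi1 (n : ℕ) (b : ℤ → ℤ → ℤ) (i : ℤ) (hne : i ≠ (n:ℤ))
    (hz : ∀ s t : ℤ, s ≤ 0 ∨ (n:ℤ) < s ∨ t ≤ 0 ∨ (n:ℤ) < t → b s t = 0) :
    GamSiB n b i 1 = b 1 i - b 1 (i-1) := by
  unfold GamSiB
  rw [Finset.Icc_self, Finset.sum_singleton, show i + 1 - (1:ℤ) = i by ring]
  unfold dsB
  rw [if_neg hne, show (1:ℤ) - 1 = 0 by norm_num, hz 0 i (by omega), hz 0 (i+1) (by omega)]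
  ring

lemma gamlam0 (n : ℕ) (b : ℤ → ℤ → ℤ) (hn' : 1 ≤ (n:ℤ))
    (hz : ∀ s t : ℤ, s ≤ 0 ∨ (n:ℤ) < s ∨ t ≤ 0 ∨ (n:ℤ) < t → b s t = 0) :
    GamLam n b (fun s => if s = 1 then (1:ℤ) else 0) = b 1 (n:ℤ) - 2 * b 1 ((n:ℤ)-1) := by
  unfold GamLam
  have H := sum_ind3 (n:ℤ)
    (fun s t => if t = 1 then dsB n b s (n:ℤ) else 2 * dsB n b (s+t-1) ((n:ℤ)-t)) hn'
  beta_reduce at H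
  beta_reduce
  rw [H, if_pos rfl]
  unfold dsB
  rw [if_pos rfl, show (1:ℤ) - 1 = 0 by norm_num, hz 0 (n:ℤ) (by omega)]
  ring

/-- `jump_i(b) ≥ 0`, and if `jump_i(b) = 0` then `f̃_i(b) = f̃*_i(b)` (type `Bₙ`). -/
theorem stmt19 (n : ℕ) (hn : 2 ≤ n) (i : ℤ) (hi1 : 1 ≤ i) (hin : i ≤ (n : ℤ))
    (b : ℤ → ℤ → ℤ) (hb : b ∈ BinfB n) :
    0 ≤ jumpB n b i ∧ (jumpB n b i = 0 → fB n b i = fStarB n b i) := by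
  obtain ⟨hb0, hsupp, -, -, -⟩ := hb
  have hn2 : (2:ℤ) ≤ (n:ℤ) := by exact_mod_cast hn
  have hn' : (1:ℤ) ≤ (n:ℤ) := by omega
  have hz : ∀ s t : ℤ, s ≤ 0 ∨ (n:ℤ) < s ∨ t ≤ 0 ∨ (n:ℤ) < t → b s t = 0 := by
    intro s t h; apply hsupp; unfold cellB; omega
  have h1mem : (1:ℤ) ∈ Icc (1:ℤ) (n:ℤ) := Finset.mem_Icc.2 ⟨le_refl _, hn'⟩
  have epsb_ge : GamB n b i 1 ≤ epsB n b i := by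
    unfold epsB
    rw [max_image_unbot' 1 (n:ℤ) hn' (GamB n b i)]
    exact Finset.le_max' _ _ (Finset.mem_image_of_mem _ h1mem)
  by_cases hne : i = (n:ℤ)
  · -- case i = n
    subst hne
    have hid : GamB n b (n:ℤ) 1
        + GamLam n b (fun s => if s = 1 then (1:ℤ) else 0) + hwtB n b (n:ℤ) = 0 := by
      rw [gam1_n n b hn' hz, gamlam0 n b hn' hz, hwt_n n hn b]; ring
    have hbdd : BddAbove {x : ℤ | ∃ lam : ℤ → ℤ,
        StrictInDelta n lam ∧ 1 ≤ lam 1 ∧ x = GamLam n b lam} := by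
      refine ⟨∑ s ∈ Icc (1:ℤ) (n:ℤ), ∑ t ∈ Icc (1:ℤ) (n:ℤ),
        max (if t = 1 then dsB n b s (n:ℤ) else 2 * dsB n b (s+t-1) ((n:ℤ)-t)) 0, ?_⟩
      rintro x ⟨lam, -, -, rfl⟩
      unfold GamLam
      refine Finset.sum_le_sum fun s _ => Finset.sum_le_sum fun t _ => ?_
      by_cases h : t ≤ lam s
      · rw [if_pos h]; exact le_max_left _ _
      · rw [if_neg h]; exact le_max_right _ _
    have hmem0 : GamLam n b (fun s => if s = 1 then (1:ℤ) else 0) ∈ {x : ℤ | ∃ lam : ℤ → ℤ,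
        StrictInDelta n lam ∧ 1 ≤ lam 1 ∧ x = GamLam n b lam} :=
      ⟨_, strict0 n hn, by norm_num, rfl⟩
    have hges : GamLam n b (fun s => if s = 1 then (1:ℤ) else 0) ≤ epsSnB n b := by
      unfold epsSnB; exact le_csSup hbdd hmem0
    have hstar : epsStarB n b (n:ℤ) = epsSnB n b := if_pos rfl
    constructor
    · unfold jumpB; rw [hstar]; linarith
    · intro h0
      unfold jumpB at h0; rw [hstar] at h0
      have heq1 : GamB n b (n:ℤ) 1 = epsB n b (n:ℤ) := by linarith
      have heq2 : GamLam n b (fun s => if s = 1 then (1:ℤ) else 0) = epsSnB n b := by linarith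
      have hmB : mB n b (n:ℤ) = 1 := by
        unfold mB; exact min_filter_one (n:ℤ) hn' _ heq1
      have hms : ∀ s : ℤ, mSnB n b s = (if s = 1 then (1:ℤ) else 0) := by
        intro s
        by_cases hs : s = 1
        · subst hs; rw [if_pos rfl]
          unfold mSnB
          apply IsLeast.csInf_eq
          constructor
          · exact ⟨_, strict0 n hn, by norm_num, heq2, by norm_num⟩
          · rintro x ⟨lam, hl, h1, -, rfl⟩; exact h1
        · rw [if_neg hs]
          unfold mSnB
          apply IsLeast.csInf_eq
          constructor
          · exact ⟨_, strict0 n hn, by norm_num, heq2, (if_neg hs).symm⟩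
          · rintro x ⟨lam, hl, -, -, rfl⟩; exact hl.1 s
      have hstf : fStarB n b (n:ℤ) = fSnB n b := if_pos rfl
      rw [hstf]
      funext u v
      unfold fB fSnB
      rw [hmB]
      simp only [hms]
      have H := sum_ind3 (n:ℤ) (fun s t =>
        if t = 1 then eB n s (n:ℤ) u v - eB n (s-1) (n:ℤ) u v
        else eB n (s+t-1) ((n:ℤ)-t) u v - eB n (s+t-2) ((n:ℤ)-t) u v) hn'
      beta_reduce at H
      rw [H, if_pos rfl, show (1:ℤ) - 1 = 0 by norm_num]
      have e0 : eB n 0 (n:ℤ) u v = 0 := by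
        unfold eB; rw [if_neg]; rintro ⟨-, -, h⟩; unfold cellB at h; omega
      rw [e0]; ring
  · -- case i < n
    have hi2 : i ≤ (n:ℤ) - 1 := by omega
    have hid : GamB n b i 1 + GamSiB n b i 1 + hwtB n b i = 0 := by
      rw [gam1_lt n b i hne hn' hz, gamsi1 n b i hne hz, hwt_lt n b i hi1 hi2 hz]; ring
    have epss_ge : GamSiB n b i 1 ≤ epsSiB n b i := by
      unfold epsSiB
      rw [max_image_unbot' 1 i hi1 (GamSiB n b i)]
      exact Finset.le_max' _ _
        (Finset.mem_image_of_mem _ (Finset.mem_Icc.2 ⟨le_refl _, hi1⟩))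
    have hstar : epsStarB n b i = epsSiB n b i := if_neg hne
    constructor
    · unfold jumpB; rw [hstar]; linarith
    · intro h0
      unfold jumpB at h0; rw [hstar] at h0
      have heq1 : GamB n b i 1 = epsB n b i := by linarith
      have heq2 : GamSiB n b i 1 = epsSiB n b i := by linarith
      have hmB : mB n b i = 1 := by
        unfold mB; exact min_filter_one (n:ℤ) hn' _ heq1
      have hmSi : mSiB n b i = 1 := by
        unfold mSiB; exact min_filter_one i hi1 _ heq2
      have hstf : fStarB n b i = fSiB n b i := if_neg hne
      rw [hstf]
      funext u v
      unfold fB fSiB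
      rw [hmB, hmSi, Finset.Icc_self, Finset.sum_singleton,
        show i + 1 - (1:ℤ) = i by ring, show (1:ℤ) - 1 = 0 by norm_num]
      have e0 : eB n 0 i u v = 0 := by
        unfold eB; rw [if_neg]; rintro ⟨-, -, h⟩; unfold cellB at h; omega
      rw [e0]; ring
end
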